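/- arXiv:2012.06393 — 12 statements merged into one kernel-verified Lean document; each statement's English description precedes it below -/
import Mathlib

section
/- If A is an M×N matrix with all entries in [a,b] where 0 < a ≤ b, and positive vectors x ∈ R^M, y ∈ R^N satisfy the scaling equations ∑_j x_i A_{i,j} y_j = r_i and ∑_i x_i A_{i,j} y_j = c_j with positive r, c, ‖r‖₁ = ‖c‖₁ = s, and normalization ∑_i x_i = ∑_j y_j, then √(s/b) ≤ ∑_j y_j = ∑_i x_i ≤ √(s/a). -/
open Finset

/-
Squeezing every entry of `A` between `a` and `b` squeezes the total mass
`s = ∑ᵢ ∑ⱼ xᵢ Aᵢⱼ yⱼ` of the scaled matrix between `a (∑ x)(∑ y)` and `b (∑ x)(∑ y)`;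
under the normalization `∑ x = ∑ y` this is `a t² ≤ s ≤ b t²` for the common sum `t`.
-/

section BilinearBounds

variable {ι κ : Type*} [Fintype ι] [Fintype κ] {A : ι → κ → ℝ} {x : ι → ℝ} {y : κ → ℝ}

theorem sum_sum_mul_mul_le {b : ℝ} (hA : ∀ i j, A i j ≤ b) (hx : ∀ i, 0 ≤ x i)
    (hy : ∀ j, 0 ≤ y j) :
    ∑ i, ∑ j, x i * A i j * y j ≤ b * ((∑ i, x i) * ∑ j, y j) := by
  rw [sum_mul_sum, mul_sum]
  refine sum_le_sum fun i _ => ?_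
  rw [mul_sum]
  refine sum_le_sum fun j _ => ?_
  nlinarith [mul_nonneg (hx i) (hy j), hA i j]

theorem le_sum_sum_mul_mul {a : ℝ} (hA : ∀ i j, a ≤ A i j) (hx : ∀ i, 0 ≤ x i)
    (hy : ∀ j, 0 ≤ y j) :
    a * ((∑ i, x i) * ∑ j, y j) ≤ ∑ i, ∑ j, x i * A i j * y j := by
  rw [sum_mul_sum, mul_sum]
  refine sum_le_sum fun i _ => ?_
  rw [mul_sum]
  refine sum_le_sum fun j _ => ?_
  nlinarith [mul_nonneg (hx i) (hy j), hA i j]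

end BilinearBounds

theorem sum_scaling_factors_bounds_general
    (M N : ℕ) (A : Fin M → Fin N → ℝ) (a b s : ℝ)
    (x : Fin M → ℝ) (y : Fin N → ℝ) (r : Fin M → ℝ)
    (ha : 0 < a) (hab : a ≤ b)
    (hA : ∀ i j, a ≤ A i j ∧ A i j ≤ b)
    (hs_r : ∑ i, r i = s)
    (hx : ∀ i, 0 < x i) (hy : ∀ j, 0 < y j)
    (hrow : ∀ i, ∑ j, x i * A i j * y j = r i)
    (hnorm : ∑ i, x i = ∑ j, y j) :
    Real.sqrt (s / b) ≤ ∑ j, y j ∧ (∑ j, y j = ∑ i, x i) ∧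
      ∑ i, x i ≤ Real.sqrt (s / a) := by
  have hx₀ i := (hx i).le
  have hy₀ j := (hy j).le
  have hlow := le_sum_sum_mul_mul (fun i j => (hA i j).1) hx₀ hy₀
  have hhigh := sum_sum_mul_mul_le (fun i j => (hA i j).2) hx₀ hy₀
  simp only [← hnorm, hrow, hs_r] at hlow hhigh
  have ht : 0 ≤ ∑ i, x i := sum_nonneg fun i _ => hx₀ i
  refine ⟨?_, hnorm.symm, ?_⟩
  · rw [← hnorm, Real.sqrt_le_left ht, div_le_iff₀ (ha.trans_le hab)]
    nlinarith
  · refine Real.le_sqrt_of_sq_le ?_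
    rw [le_div_iff₀ ha]
    nlinarith

theorem sum_scaling_factors_bounds
    (M N : ℕ) (A : Fin M → Fin N → ℝ) (a b s : ℝ)
    (x : Fin M → ℝ) (y : Fin N → ℝ) (r : Fin M → ℝ) (c : Fin N → ℝ)
    (ha : 0 < a) (hab : a ≤ b)
    (hA : ∀ i j, a ≤ A i j ∧ A i j ≤ b)
    (hr : ∀ i, 0 < r i) (hc : ∀ j, 0 < c j)
    (hs_r : ∑ i, r i = s) (hs_c : ∑ j, c j = s)
    (hx : ∀ i, 0 < x i) (hy : ∀ j, 0 < y j)
    (hrow : ∀ i, ∑ j, x i * A i j * y j = r i)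
    (hcol : ∀ j, ∑ i, x i * A i j * y j = c j)
    (hnorm : ∑ i, x i = ∑ j, y j) :
    Real.sqrt (s / b) ≤ ∑ j, y j ∧ (∑ j, y j = ∑ i, x i) ∧
      ∑ i, x i ≤ Real.sqrt (s / a) :=
  sum_scaling_factors_bounds_general M N A a b s x y r ha hab hA hs_r hx hy hrow hnorm
end

section
/- If A is an M×N matrix with entries in [a,b], 0 < a ≤ b, and positive vectors x, y scale A to row sums r and column sums c with ‖r‖₁ = ‖c‖₁ = s and ∑_i x_i = ∑_j y_j, then for all i and j: (√a / b) ≤ x_i / (r_i/√s) ≤ (√b / a) and (√a / b) ≤ y_j / (c_j/√s) ≤ (√b / a). -/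
/-! With `Y = ∑ i, x i = ∑ j, y j`, each row sum `r i = x i * ∑ j, A i j * y j` lies between
`a * Y * x i` and `b * Y * x i`. Summing over `i` gives `a * Y ^ 2 ≤ s ≤ b * Y ^ 2`, i.e.
`√a * Y ≤ √s ≤ √b * Y`, and combining the two sandwiches bounds `x i * √s / r i`.
Columns are the rows of the transposed matrix. -/

open Finset

section ScalingBounds

variable {ι κ : Type*} [Fintype ι] [Fintype κ]

lemma const_mul_sum_mul_le_sum {A y : κ → ℝ} {a x : ℝ} (hx : 0 ≤ x) (hy : ∀ j, 0 ≤ y j)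
    (ha : ∀ j, a ≤ A j) : a * (∑ j, y j) * x ≤ ∑ j, x * A j * y j :=
  calc a * (∑ j, y j) * x = ∑ j, x * a * y j := by
        rw [mul_sum, sum_mul]; exact sum_congr rfl fun j _ => by ring
    _ ≤ ∑ j, x * A j * y j := sum_le_sum fun j _ => by gcongr; exacts [hy j, ha j]

lemma sum_le_const_mul_sum_mul {A y : κ → ℝ} {b x : ℝ} (hx : 0 ≤ x) (hy : ∀ j, 0 ≤ y j)
    (hb : ∀ j, A j ≤ b) : ∑ j, x * A j * y j ≤ b * (∑ j, y j) * x :=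
  calc ∑ j, x * A j * y j ≤ ∑ j, x * b * y j :=
        sum_le_sum fun j _ => by gcongr; exacts [hy j, hb j]
    _ = b * (∑ j, y j) * x := by
        rw [mul_sum, sum_mul]; exact sum_congr rfl fun j _ => by ring

lemma sqrt_mul_le_sqrt_of_mul_sq_le {a Y s : ℝ} (hY : 0 ≤ Y) (h : a * Y ^ 2 ≤ s) :
    √a * Y ≤ √s := by
  simpa [Real.sqrt_mul' a (sq_nonneg Y), Real.sqrt_sq hY] using Real.sqrt_le_sqrt h

lemma sqrt_le_sqrt_mul_of_le_mul_sq {b Y s : ℝ} (hY : 0 ≤ Y) (h : s ≤ b * Y ^ 2) :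
    √s ≤ √b * Y := by
  simpa [Real.sqrt_mul' b (sq_nonneg Y), Real.sqrt_sq hY] using Real.sqrt_le_sqrt h

lemma div_div_sqrt_bounds {a b s Y t u : ℝ} (ha : 0 < a) (hY : 0 ≤ Y) (ht : 0 < t)
    (hu : 0 ≤ u) (ht_lb : a * Y * u ≤ t) (ht_ub : t ≤ b * Y * u)
    (hs_lb : a * Y ^ 2 ≤ s) (hs_ub : s ≤ b * Y ^ 2) :
    √a / b ≤ u / (t / √s) ∧ u / (t / √s) ≤ √b / a := by
  have hb : 0 < b :=
    pos_of_mul_pos_left (pos_of_mul_pos_left (ht.trans_le ht_ub) hu) hY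
  have hsa := sqrt_mul_le_sqrt_of_mul_sq_le hY hs_lb
  have hsb := sqrt_le_sqrt_mul_of_le_mul_sq hY hs_ub
  rw [div_div_eq_mul_div, div_le_div_iff₀ hb ht, div_le_div_iff₀ ht ha]
  constructor
  · calc √a * t ≤ √a * (b * Y * u) := by gcongr
      _ = √a * Y * (u * b) := by ring
      _ ≤ √s * (u * b) := by gcongr
      _ = u * √s * b := by ring
  · calc u * √s * a ≤ u * (√b * Y) * a := by gcongr
      _ = √b * (a * Y * u) := by ring
      _ ≤ √b * t := by gcongr

theorem scaling_row_factor_bounds (A : ι → κ → ℝ) (x : ι → ℝ) (y : κ → ℝ) (r : ι → ℝ)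
    {a b s : ℝ} (ha : 0 < a) (hA : ∀ i j, a ≤ A i j ∧ A i j ≤ b) (hr : ∀ i, 0 < r i)
    (hs : ∑ i, r i = s) (hx : ∀ i, 0 ≤ x i) (hy : ∀ j, 0 ≤ y j)
    (hrow : ∀ i, ∑ j, x i * A i j * y j = r i) (hnorm : ∑ i, x i = ∑ j, y j) (i : ι) :
    √a / b ≤ x i / (r i / √s) ∧ x i / (r i / √s) ≤ √b / a := by
  set Y := ∑ j, y j
  have hr_lb i : a * Y * x i ≤ r i :=
    hrow i ▸ const_mul_sum_mul_le_sum (hx i) hy fun j => (hA i j).1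
  have hr_ub i : r i ≤ b * Y * x i :=
    hrow i ▸ sum_le_const_mul_sum_mul (hx i) hy fun j => (hA i j).2
  have hs_lb : a * Y ^ 2 ≤ s :=
    calc a * Y ^ 2 = ∑ i, a * Y * x i := by rw [← mul_sum, hnorm]; ring
      _ ≤ s := hs ▸ sum_le_sum fun i _ => hr_lb i
  have hs_ub : s ≤ b * Y ^ 2 :=
    calc s ≤ ∑ i, b * Y * x i := hs ▸ sum_le_sum fun i _ => hr_ub i
      _ = b * Y ^ 2 := by rw [← mul_sum, hnorm]; ring
  exact div_div_sqrt_bounds ha (sum_nonneg fun j _ => hy j) (hr i) (hx i)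
    (hr_lb i) (hr_ub i) hs_lb hs_ub

end ScalingBounds

theorem boundedness_of_scaling_factors_general
    (M N : ℕ) (A : Fin M → Fin N → ℝ) (a b s : ℝ)
    (x : Fin M → ℝ) (y : Fin N → ℝ) (r : Fin M → ℝ) (c : Fin N → ℝ)
    (ha : 0 < a)
    (hA : ∀ i j, a ≤ A i j ∧ A i j ≤ b)
    (hr : ∀ i, 0 < r i) (hc : ∀ j, 0 < c j)
    (hs_r : ∑ i, r i = s) (hs_c : ∑ j, c j = s)
    (hx : ∀ i, 0 < x i) (hy : ∀ j, 0 < y j)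
    (hrow : ∀ i, ∑ j, x i * A i j * y j = r i)
    (hcol : ∀ j, ∑ i, x i * A i j * y j = c j)
    (hnorm : ∑ i, x i = ∑ j, y j) :
    (∀ i, Real.sqrt a / b ≤ x i / (r i / Real.sqrt s) ∧
        x i / (r i / Real.sqrt s) ≤ Real.sqrt b / a) ∧
    (∀ j, Real.sqrt a / b ≤ y j / (c j / Real.sqrt s) ∧
        y j / (c j / Real.sqrt s) ≤ Real.sqrt b / a) := by
  have hcol_transpose j : ∑ i, y j * A i j * x i = c j := by
    rw [← hcol j]; exact sum_congr rfl fun i _ => by ring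
  exact ⟨scaling_row_factor_bounds A x y r ha hA hr hs_r (fun i => (hx i).le)
      (fun j => (hy j).le) hrow hnorm,
    scaling_row_factor_bounds (fun j i => A i j) y x c ha (fun j i => hA i j) hc hs_c
      (fun j => (hy j).le) (fun i => (hx i).le) hcol_transpose hnorm.symm⟩

theorem boundedness_of_scaling_factors
    (M N : ℕ) (A : Fin M → Fin N → ℝ) (a b s : ℝ)
    (x : Fin M → ℝ) (y : Fin N → ℝ) (r : Fin M → ℝ) (c : Fin N → ℝ)
    (ha : 0 < a) (hab : a ≤ b)
    (hA : ∀ i j, a ≤ A i j ∧ A i j ≤ b)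
    (hr : ∀ i, 0 < r i) (hc : ∀ j, 0 < c j)
    (hs_r : ∑ i, r i = s) (hs_c : ∑ j, c j = s)
    (hx : ∀ i, 0 < x i) (hy : ∀ j, 0 < y j)
    (hrow : ∀ i, ∑ j, x i * A i j * y j = r i)
    (hcol : ∀ j, ∑ i, x i * A i j * y j = c j)
    (hnorm : ∑ i, x i = ∑ j, y j) :
    (∀ i, Real.sqrt a / b ≤ x i / (r i / Real.sqrt s) ∧
        x i / (r i / Real.sqrt s) ≤ Real.sqrt b / a) ∧
    (∀ j, Real.sqrt a / b ≤ y j / (c j / Real.sqrt s) ∧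
        y j / (c j / Real.sqrt s) ≤ Real.sqrt b / a) :=
  boundedness_of_scaling_factors_general M N A a b s x y r c ha hA hr hc hs_r hs_c hx hy hrow hcol
    hnorm
end

section
/- Suppose positive vectors x, y scale a positive matrix A to row sums r and column sums c (all positive, ‖r‖₁ = ‖c‖₁). Then any other pair (x', y') of positive vectors scaling A to the same row and column sums satisfies x' = αx and y' = α⁻¹y for some α > 0; moreover there is at most one such pair with ‖x‖₁ = ‖y‖₁. -/
/-!
The scaled matrices `B = D(x) A D(y)` and `B' = D(x') A D(y')` have the same row and column sums,
and `log B' - log B` has the form `p i + q j`, so it is orthogonal to `B' - B`: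
`∑ (B' - B) (log B' - log B) = 0`. Since `log` is increasing, every term is nonnegative, hence
zero, hence `B' = B`. Cancelling `A` gives `x'ᵢ y'ⱼ = xᵢ yⱼ`, i.e. `x' = α x` and `y' = α⁻¹ y`,
and equal norms force `α = 1`.
-/

open Finset Real

lemma sub_mul_log_sub_log_nonneg {a b : ℝ} (ha : 0 < a) (hb : 0 < b) :
    0 ≤ (a - b) * (log a - log b) := by
  rcases le_total a b with hab | hab
  · exact mul_nonneg_of_nonpos_of_nonpos (by linarith) (by linarith [log_le_log ha hab])
  · exact mul_nonneg (by linarith) (by linarith [log_le_log hb hab])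

lemma eq_of_sub_mul_log_sub_log_eq_zero {a b : ℝ} (ha : 0 < a) (hb : 0 < b)
    (h : (a - b) * (log a - log b) = 0) : a = b := by
  rcases mul_eq_zero.mp h with h | h
  · linarith
  · exact log_injOn_pos ha hb (by linarith)

lemma log_mul_mul {a b c : ℝ} (ha : 0 < a) (hb : 0 < b) (hc : 0 < c) :
    log (a * b * c) = log a + log b + log c := by
  rw [log_mul (by positivity) hc.ne', log_mul ha.ne' hb.ne']

variable {ι κ : Type*}

section

variable [Fintype ι] [Fintype κ]

theorem eq_of_sum_eq_of_log_sub_eq_add {B B' : ι → κ → ℝ} (hB : ∀ i j, 0 < B i j)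
    (hB' : ∀ i j, 0 < B' i j) (p : ι → ℝ) (q : κ → ℝ)
    (hlog : ∀ i j, log (B' i j) - log (B i j) = p i + q j)
    (hrow : ∀ i, ∑ j, B' i j = ∑ j, B i j) (hcol : ∀ j, ∑ i, B' i j = ∑ i, B i j) :
    B' = B := by
  have hrow₀ : ∀ i, ∑ j, (B' i j - B i j) = 0 := fun i => by
    rw [sum_sub_distrib, hrow, sub_self]
  have hcol₀ : ∀ j, ∑ i, (B' i j - B i j) = 0 := fun j => by
    rw [sum_sub_distrib, hcol, sub_self]
  have horth : ∑ i, ∑ j, (B' i j - B i j) * (log (B' i j) - log (B i j)) = 0 := by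
    simp only [hlog, mul_add, sum_add_distrib]
    rw [sum_comm (f := fun i j => (B' i j - B i j) * q j)]
    simp only [← sum_mul, hrow₀, hcol₀, zero_mul, sum_const_zero, add_zero]
  have hterm := fun i j => sub_mul_log_sub_log_nonneg (hB' i j) (hB i j)
  ext i j
  rw [sum_eq_zero_iff_of_nonneg fun i _ => sum_nonneg fun j _ => hterm i j] at horth
  have hi := (sum_eq_zero_iff_of_nonneg fun j _ => hterm i j).mp (horth i (mem_univ i))
  exact eq_of_sub_mul_log_sub_log_eq_zero (hB' i j) (hB i j) (hi j (mem_univ j))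

theorem mul_eq_mul_of_scaling_sums_eq {A : ι → κ → ℝ} (hA : ∀ i j, 0 < A i j)
    {x x' : ι → ℝ} {y y' : κ → ℝ} (hx : ∀ i, 0 < x i) (hy : ∀ j, 0 < y j)
    (hx' : ∀ i, 0 < x' i) (hy' : ∀ j, 0 < y' j)
    (hrow : ∀ i, ∑ j, x' i * A i j * y' j = ∑ j, x i * A i j * y j)
    (hcol : ∀ j, ∑ i, x' i * A i j * y' j = ∑ i, x i * A i j * y j) (i : ι) (j : κ) :
    x' i * y' j = x i * y j := by
  have hB := eq_of_sum_eq_of_log_sub_eq_add (B := fun i j => x i * A i j * y j)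
    (B' := fun i j => x' i * A i j * y' j) (fun i j => mul_pos (mul_pos (hx i) (hA i j)) (hy j))
    (fun i j => mul_pos (mul_pos (hx' i) (hA i j)) (hy' j))
    (fun i => log (x' i) - log (x i)) (fun j => log (y' j) - log (y j))
    (fun i j => by
      rw [log_mul_mul (hx' i) (hA i j) (hy' j), log_mul_mul (hx i) (hA i j) (hy j)]; ring)
    hrow hcol
  have hij := congrFun₂ hB i j
  rw [mul_right_comm (x' i), mul_right_comm (x i)] at hij
  exact mul_right_cancel₀ (hA i j).ne' hij

end

lemma exists_scale_of_mul_eq_mul {x x' : ι → ℝ} {y y' : κ → ℝ} (hx : ∀ i, 0 < x i)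
    (hy : ∀ j, 0 < y j) (hx' : ∀ i, 0 < x' i) (hy' : ∀ j, 0 < y' j)
    (h : ∀ i j, x' i * y' j = x i * y j) (i₀ : ι) (j₀ : κ) :
    ∃ α : ℝ, 0 < α ∧ (∀ i, x' i = α * x i) ∧ (∀ j, y' j = α⁻¹ * y j) := by
  refine ⟨x' i₀ / x i₀, div_pos (hx' i₀) (hx i₀), fun i => ?_, fun j => ?_⟩
  · rw [div_mul_eq_mul_div, eq_div_iff (hx i₀).ne']
    refine mul_right_cancel₀ (mul_pos (hy' j₀) (hy j₀)).ne' ?_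
    linear_combination (x i₀ * y j₀) * h i j₀ - (x i * y j₀) * h i₀ j₀
  · rw [inv_div, div_mul_eq_mul_div, eq_div_iff (hx' i₀).ne', mul_comm]
    exact h i₀ j

lemma eq_one_of_mul_eq_inv_mul {α s : ℝ} (hα : 0 < α) (hs : 0 < s) (h : α * s = α⁻¹ * s) :
    α = 1 := by
  have hsq : α * α = 1 := by
    nth_rw 2 [mul_right_cancel₀ hs.ne' h]
    exact mul_inv_cancel₀ hα.ne'
  exact (mul_self_eq_one_iff.mp hsq).resolve_right (by linarith)

theorem uniqueness_of_scaling_factors_general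
    (M N : ℕ) (A : Fin M → Fin N → ℝ)
    (x x' : Fin M → ℝ) (y y' : Fin N → ℝ) (r : Fin M → ℝ) (c : Fin N → ℝ)
    (hA : ∀ i j, 0 < A i j)
    (hr : ∀ i, 0 < r i) (hc : ∀ j, 0 < c j)
    (hx : ∀ i, 0 < x i) (hy : ∀ j, 0 < y j)
    (hx' : ∀ i, 0 < x' i) (hy' : ∀ j, 0 < y' j)
    (hrow : ∀ i, ∑ j, x i * A i j * y j = r i)
    (hcol : ∀ j, ∑ i, x i * A i j * y j = c j)
    (hrow' : ∀ i, ∑ j, x' i * A i j * y' j = r i)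
    (hcol' : ∀ j, ∑ i, x' i * A i j * y' j = c j) :
    (∃ α : ℝ, 0 < α ∧ (∀ i, x' i = α * x i) ∧ (∀ j, y' j = α⁻¹ * y j)) ∧
    ((∑ i, x i = ∑ j, y j) → (∑ i, x' i = ∑ j, y' j) →
      x' = x ∧ y' = y) := by
  rcases isEmpty_or_nonempty (Fin M) with hM | ⟨⟨i₀⟩⟩
  · have : IsEmpty (Fin N) := ⟨fun j => (hc j).ne' (by simp [← hcol j])⟩
    exact ⟨⟨1, one_pos, isEmptyElim, isEmptyElim⟩,
      fun _ _ => ⟨Subsingleton.elim _ _, Subsingleton.elim _ _⟩⟩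
  obtain ⟨j₀⟩ : Nonempty (Fin N) := by
    by_contra hN
    simp only [not_nonempty_iff] at hN
    exact (hr i₀).ne' (by simp [← hrow i₀])
  have houter := mul_eq_mul_of_scaling_sums_eq hA hx hy hx' hy'
    (fun i => (hrow' i).trans (hrow i).symm) (fun j => (hcol' j).trans (hcol j).symm)
  obtain ⟨α, hα, hxα, hyα⟩ := exists_scale_of_mul_eq_mul hx hy hx' hy' houter i₀ j₀
  refine ⟨⟨α, hα, hxα, hyα⟩, fun hxy hxy' => ?_⟩
  have hα₁ : α = 1 := by
    refine eq_one_of_mul_eq_inv_mul hα (sum_pos (fun i _ => hx i) ⟨i₀, mem_univ i₀⟩) ?_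
    calc α * ∑ i, x i = ∑ i, x' i := by simp only [mul_sum, hxα]
      _ = α⁻¹ * ∑ i, x i := by rw [hxy', hxy, mul_sum]; simp only [hyα]
  subst hα₁
  exact ⟨funext fun i => by rw [hxα, one_mul], funext fun j => by rw [hyα, inv_one, one_mul]⟩

theorem uniqueness_of_scaling_factors
    (M N : ℕ) (A : Fin M → Fin N → ℝ)
    (x x' : Fin M → ℝ) (y y' : Fin N → ℝ) (r : Fin M → ℝ) (c : Fin N → ℝ)
    (hA : ∀ i j, 0 < A i j)
    (hr : ∀ i, 0 < r i) (hc : ∀ j, 0 < c j)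
    (hs : ∑ i, r i = ∑ j, c j)
    (hx : ∀ i, 0 < x i) (hy : ∀ j, 0 < y j)
    (hx' : ∀ i, 0 < x' i) (hy' : ∀ j, 0 < y' j)
    (hrow : ∀ i, ∑ j, x i * A i j * y j = r i)
    (hcol : ∀ j, ∑ i, x i * A i j * y j = c j)
    (hrow' : ∀ i, ∑ j, x' i * A i j * y' j = r i)
    (hcol' : ∀ j, ∑ i, x' i * A i j * y' j = c j) :
    (∃ α : ℝ, 0 < α ∧ (∀ i, x' i = α * x i) ∧ (∀ j, y' j = α⁻¹ * y j)) ∧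
    ((∑ i, x i = ∑ j, y j) → (∑ i, x' i = ∑ j, y' j) →
      x' = x ∧ y' = y) :=
  uniqueness_of_scaling_factors_general M N A x x' y y' r c hA hr hc hx hy hx' hy' hrow hcol hrow'
    hcol'
end

section
/- Let P̃ be an M×N nonnegative matrix with row sums r and column sums c, and write P̃_{i,j} = u_i P̂_{i,j} v_j where P̂ is positive and u, v are positive vectors. If |(1/c_j)∑_i P̂_{i,j} − 1| ≤ ε and |(1/r_i)∑_j P̂_{i,j} − 1| ≤ ε for all i, j with ε ∈ (0,1), then 1/(1+ε) ≤ (max_i u_i)(min_j v_j) ≤ 1/(1−ε). -/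
/-!
Let `U = maxᵢ uᵢ = u i₀` and `V = minⱼ vⱼ = v j₀`. In column `j₀`,
`c j₀ = ∑ᵢ uᵢ P̂ᵢⱼ₀ V ≤ U V ∑ᵢ P̂ᵢⱼ₀ ≤ U V (1 + ε) c j₀`, and in row `i₀`,
`U V (1 - ε) r i₀ ≤ U V ∑ⱼ P̂ᵢ₀ⱼ ≤ ∑ⱼ U P̂ᵢ₀ⱼ vⱼ = r i₀`.
-/

open Finset

lemma le_and_le_of_abs_one_div_mul_sub_one_le {α : Type*} [Field α] [LinearOrder α]
    [IsStrictOrderedRing α] {s c ε : α} (hc : 0 < c) (h : |1 / c * s - 1| ≤ ε) :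
    (1 - ε) * c ≤ s ∧ s ≤ (1 + ε) * c := by
  rw [show 1 / c * s - 1 = (s - c) / c by field_simp, abs_div, abs_of_pos hc,
    div_le_iff₀ hc, abs_sub_le_iff] at h
  constructor <;> linarith [h.1, h.2]

section Scaling

variable {ι : Type*} [Fintype ι] {p w : ι → ℝ} {a b c ε U V : ℝ}

lemma one_div_one_add_le_mul_of_sum_eq (hp : ∀ i, 0 ≤ p i) (hb : 0 ≤ b) (hc : 0 < c)
    (hsum : ∑ i, w i * p i * b = c) (hdev : |1 / c * ∑ i, p i - 1| ≤ ε) (hU : ∀ i, w i ≤ U) :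
    1 / (1 + ε) ≤ U * b := by
  have hc_le : c ≤ ∑ i, p i * (U * b) := hsum ▸ sum_le_sum fun i _ => by
    linarith [mul_le_mul_of_nonneg_right (hU i) (mul_nonneg (hp i) hb)]
  rw [← sum_mul] at hc_le
  have hS : 0 < ∑ i, p i := (sum_nonneg fun i _ => hp i).lt_of_ne fun h => by
    rw [← h, zero_mul] at hc_le
    exact hc.not_ge hc_le
  have hS_le := (le_and_le_of_abs_one_div_mul_sub_one_le hc hdev).2
  calc 1 / (1 + ε) = c / ((1 + ε) * c) := by rw [mul_comm, ← div_div, div_self hc.ne']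
    _ ≤ c / ∑ i, p i := div_le_div_of_nonneg_left hc.le hS hS_le
    _ ≤ U * b := (div_le_iff₀ hS).2 (by linarith)

lemma mul_le_one_div_one_sub_of_sum_eq (hp : ∀ i, 0 ≤ p i) (ha : 0 ≤ a) (hc : 0 < c)
    (hsum : ∑ i, a * p i * w i = c) (hdev : |1 / c * ∑ i, p i - 1| ≤ ε) (hε : ε < 1)
    (hV : ∀ i, V ≤ w i) :
    a * V ≤ 1 / (1 - ε) := by
  have hle : ∑ i, p i * (a * V) ≤ c := hsum ▸ sum_le_sum fun i _ => by
    linarith [mul_le_mul_of_nonneg_left (hV i) (mul_nonneg ha (hp i))]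
  rw [← sum_mul] at hle
  have hS_ge := (le_and_le_of_abs_one_div_mul_sub_one_le hc hdev).1
  have hlow : 0 < (1 - ε) * c := mul_pos (sub_pos.2 hε) hc
  have hS : 0 < ∑ i, p i := hlow.trans_le hS_ge
  calc a * V ≤ c / ∑ i, p i := (le_div_iff₀ hS).2 (by linarith)
    _ ≤ c / ((1 - ε) * c) := div_le_div_of_nonneg_left hc.le hlow hS_ge
    _ = 1 / (1 - ε) := by rw [mul_comm, ← div_div, div_self hc.ne']

end Scaling

theorem max_u_min_v_bounds
    (M N : ℕ) (hM : 0 < M) (hN : 0 < N)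
    (Phat : Fin M → Fin N → ℝ) (u : Fin M → ℝ) (v : Fin N → ℝ)
    (r : Fin M → ℝ) (c : Fin N → ℝ) (ε : ℝ)
    (hε : ε ∈ Set.Ioo (0 : ℝ) 1)
    (hP : ∀ i j, 0 < Phat i j)
    (hu : ∀ i, 0 < u i) (hv : ∀ j, 0 < v j)
    (hr : ∀ i, 0 < r i) (hc : ∀ j, 0 < c j)
    (hrow : ∀ i, ∑ j, u i * Phat i j * v j = r i)
    (hcol : ∀ j, ∑ i, u i * Phat i j * v j = c j)
    (hcolε : ∀ j, |(1 / c j) * ∑ i, Phat i j - 1| ≤ ε)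
    (hrowε : ∀ i, |(1 / r i) * ∑ j, Phat i j - 1| ≤ ε) :
    1 / (1 + ε) ≤ (⨆ i, u i) * (⨅ j, v j) ∧
      (⨆ i, u i) * (⨅ j, v j) ≤ 1 / (1 - ε) := by
  have : Nonempty (Fin M) := ⟨⟨0, hM⟩⟩
  have : Nonempty (Fin N) := ⟨⟨0, hN⟩⟩
  obtain ⟨i₀, hi₀⟩ := exists_eq_ciSup_of_finite (f := u)
  obtain ⟨j₀, hj₀⟩ := exists_eq_ciInf_of_finite (f := v)
  constructor
  · rw [← hj₀]
    exact one_div_one_add_le_mul_of_sum_eq (fun i => (hP i j₀).le) (hv j₀).le (hc j₀)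
      (hcol j₀) (hcolε j₀) fun i => le_ciSup (Finite.bddAbove_range u) i
  · rw [← hi₀]
    exact mul_le_one_div_one_sub_of_sum_eq (fun j => (hP i₀ j).le) (hu i₀).le (hr i₀)
      (hrow i₀) (hrowε i₀) hε.2 fun j => ciInf_le (Finite.bddBelow_range v) j
end

section
/- Under the same setup (P̃_{i,j} = u_i P̂_{i,j} v_j with exact row sums r and column sums c for P̃, and approximate scaling of P̂ to within relative error ε ∈ (0,1)), it also holds that 1/(1+ε) ≤ (min_i u_i)(max_j v_j) ≤ 1/(1−ε). -/
/-!
Let `m = u i₀` be the smallest entry of `u` and `s = v j₀` the largest entry of `v`. Along row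
`i₀` every term of `r i₀ = ∑ⱼ u i₀ P̂ i₀ j v j` is at most `m s P̂ i₀ j`, and the row sum of `P̂` is
at most `(1 + ε) r i₀`; hence `r i₀ ≤ (1 + ε) m s r i₀`. Symmetrically, along column `j₀` every term
of `c j₀` is at least `m s P̂ i j₀`, and the column sum of `P̂` is at least `(1 - ε) c j₀`, so
`(1 - ε) m s c j₀ ≤ c j₀`.
-/

open Finset

lemma mem_Icc_of_abs_one_div_mul_sub_one_le {S r ε : ℝ} (hr : 0 < r)
    (h : |1 / r * S - 1| ≤ ε) : S ∈ Set.Icc ((1 - ε) * r) ((1 + ε) * r) := by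
  have hS : S = r * (1 / r * S) := by field_simp
  obtain ⟨hlo, hhi⟩ := abs_le.mp h
  constructor <;> nlinarith

section ScaledSums

variable {ι : Type*} [Fintype ι] {P w : ι → ℝ}

lemma sum_mul_mul_le_of_le {a s : ℝ} (hP : ∀ j, 0 ≤ P j) (ha : 0 ≤ a) (hw : ∀ j, w j ≤ s) :
    ∑ j, a * P j * w j ≤ a * s * ∑ j, P j := by
  rw [mul_sum]
  refine sum_le_sum fun j _ => ?_
  calc a * P j * w j ≤ a * P j * s := mul_le_mul_of_nonneg_left (hw j) (mul_nonneg ha (hP j))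
    _ = a * s * P j := by ring

lemma mul_mul_sum_le_of_le {a b : ℝ} (hP : ∀ i, 0 ≤ P i) (hb : 0 ≤ b) (hw : ∀ i, a ≤ w i) :
    a * b * ∑ i, P i ≤ ∑ i, w i * P i * b := by
  rw [mul_sum]
  refine sum_le_sum fun i _ => ?_
  calc a * b * P i = a * P i * b := by ring
    _ ≤ w i * P i * b :=
      mul_le_mul_of_nonneg_right (mul_le_mul_of_nonneg_right (hw i) (hP i)) hb

lemma one_div_one_add_le_mul_of_row_sum {a s r ε : ℝ} (hP : ∀ j, 0 ≤ P j) (ha : 0 ≤ a)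
    (hs : 0 ≤ s) (hw : ∀ j, w j ≤ s) (hr : 0 < r) (hrow : ∑ j, a * P j * w j = r)
    (hε : |1 / r * ∑ j, P j - 1| ≤ ε) : 1 / (1 + ε) ≤ a * s := by
  have hε0 : 0 ≤ ε := (abs_nonneg _).trans hε
  have hP_le := (mem_Icc_of_abs_one_div_mul_sub_one_le hr hε).2
  have hr_le : r ≤ a * s * ((1 + ε) * r) := by
    calc r = ∑ j, a * P j * w j := hrow.symm
      _ ≤ a * s * ∑ j, P j := sum_mul_mul_le_of_le hP ha hw
      _ ≤ a * s * ((1 + ε) * r) := mul_le_mul_of_nonneg_left hP_le (mul_nonneg ha hs)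
  rw [div_le_iff₀ (by linarith)]
  nlinarith

lemma mul_le_one_div_one_sub_of_col_sum {a b c ε : ℝ} (hP : ∀ i, 0 ≤ P i) (ha : 0 ≤ a)
    (hb : 0 ≤ b) (hw : ∀ i, a ≤ w i) (hc : 0 < c) (hcol : ∑ i, w i * P i * b = c)
    (hε : |1 / c * ∑ i, P i - 1| ≤ ε) (hε1 : ε < 1) : a * b ≤ 1 / (1 - ε) := by
  have hP_ge := (mem_Icc_of_abs_one_div_mul_sub_one_le hc hε).1
  have hc_ge : a * b * ((1 - ε) * c) ≤ c := by
    calc a * b * ((1 - ε) * c) ≤ a * b * ∑ i, P i :=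
          mul_le_mul_of_nonneg_left hP_ge (mul_nonneg ha hb)
      _ ≤ ∑ i, w i * P i * b := mul_mul_sum_le_of_le hP hb hw
      _ = c := hcol
  rw [le_div_iff₀ (by linarith)]
  nlinarith

end ScaledSums

theorem min_u_max_v_bounds
    (M N : ℕ) (hM : 0 < M) (hN : 0 < N)
    (Phat : Fin M → Fin N → ℝ) (u : Fin M → ℝ) (v : Fin N → ℝ)
    (r : Fin M → ℝ) (c : Fin N → ℝ) (ε : ℝ)
    (hε : ε ∈ Set.Ioo (0 : ℝ) 1)
    (hP : ∀ i j, 0 < Phat i j)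
    (hu : ∀ i, 0 < u i) (hv : ∀ j, 0 < v j)
    (hr : ∀ i, 0 < r i) (hc : ∀ j, 0 < c j)
    (hrow : ∀ i, ∑ j, u i * Phat i j * v j = r i)
    (hcol : ∀ j, ∑ i, u i * Phat i j * v j = c j)
    (hcolε : ∀ j, |(1 / c j) * ∑ i, Phat i j - 1| ≤ ε)
    (hrowε : ∀ i, |(1 / r i) * ∑ j, Phat i j - 1| ≤ ε) :
    1 / (1 + ε) ≤ (⨅ i, u i) * (⨆ j, v j) ∧
      (⨅ i, u i) * (⨆ j, v j) ≤ 1 / (1 - ε) := by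
  have : Nonempty (Fin M) := ⟨⟨0, hM⟩⟩
  have : Nonempty (Fin N) := ⟨⟨0, hN⟩⟩
  obtain ⟨i₀, hi₀⟩ := exists_eq_ciInf_of_finite (f := u)
  obtain ⟨j₀, hj₀⟩ := exists_eq_ciSup_of_finite (f := v)
  have hu_ge : ∀ i, u i₀ ≤ u i := fun i => hi₀ ▸ ciInf_le (Finite.bddBelow_range u) i
  have hv_le : ∀ j, v j ≤ v j₀ := fun j => hj₀ ▸ le_ciSup (Finite.bddAbove_range v) j
  rw [← hi₀, ← hj₀]
  exact ⟨one_div_one_add_le_mul_of_row_sum (fun j => (hP i₀ j).le) (hu i₀).le (hv j₀).le hv_le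
      (hr i₀) (hrow i₀) (hrowε i₀),
    mul_le_one_div_one_sub_of_col_sum (fun i => (hP i j₀).le) (hu i₀).le (hv j₀).le hu_ge (hc j₀)
      (hcol j₀) (hcolε j₀) hε.2⟩
end

section
/- In the setting where P̃_{i,j} = u_i P̂_{i,j} v_j has exact row sums r and P̂ satisfies the approximate scaling bounds with ε ∈ (0,1), if ℓ = argmax_i u_i, then (1/r_ℓ) ∑_j P̂_{ℓ,j} (v_j/(min_j v_j) − 1) ≤ 2ε. -/
/-! Write `m = ⨅ v` and `S = ∑ⱼ P̂_{ℓ,j}`. Since `∑ⱼ P̂_{ℓ,j} v_j = r_ℓ / u_ℓ`, the quantity to bound is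
`1 / (u_ℓ m) - S / r_ℓ`. As `ℓ` maximises `u`, the hypothesis `1/(1+ε) ≤ (max u)(min v)` gives
`1 / (u_ℓ m) ≤ 1 + ε`, while the row condition gives `S / r_ℓ ≥ 1 - ε`. -/

open Finset

theorem one_div_mul_sum_mul_div_sub_one {ι : Type*} (s : Finset ι) (P v : ι → ℝ) {a m r : ℝ}
    (ha : a ≠ 0) (hm : m ≠ 0) (hr : r ≠ 0) (hrow : ∑ j ∈ s, a * P j * v j = r) :
    (1 / r) * ∑ j ∈ s, P j * (v j / m - 1) = 1 / (a * m) - (1 / r) * ∑ j ∈ s, P j := by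
  have hweighted : ∑ j ∈ s, P j * v j = r / a := by
    rw [eq_div_iff ha, ← hrow, sum_mul]
    exact sum_congr rfl fun j _ => by ring
  have hsplit : ∑ j ∈ s, P j * (v j / m - 1) = (∑ j ∈ s, P j * v j) / m - ∑ j ∈ s, P j := by
    simp only [mul_sub, mul_one, ← mul_div_assoc, sum_sub_distrib, sum_div]
  rw [hsplit, hweighted]
  field_simp

theorem argmax_row_sum_bound_general
    (M N : ℕ)
    (Phat : Fin M → Fin N → ℝ) (u : Fin M → ℝ) (v : Fin N → ℝ)
    (r : Fin M → ℝ) (ε : ℝ)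
    (hε : ε ∈ Set.Ioo (0 : ℝ) 1)
    (hr : ∀ i, 0 < r i)
    (hrow : ∀ i, ∑ j, u i * Phat i j * v j = r i)
    (hrowε : ∀ i, |(1 / r i) * ∑ j, Phat i j - 1| ≤ ε)
    (hmaxmin : 1 / (1 + ε) ≤ (⨆ i, u i) * (⨅ j, v j))
    (ℓ : Fin M) (hℓ : ∀ i, u i ≤ u ℓ) :
    (1 / r ℓ) * ∑ j, Phat ℓ j * (v j / (⨅ j', v j') - 1) ≤ 2 * ε := by
  have : Nonempty (Fin M) := ⟨ℓ⟩
  have hsup : ⨆ i, u i = u ℓ :=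
    le_antisymm (ciSup_le hℓ) (le_ciSup (Finite.bddAbove_range u) ℓ)
  have hε₁ : 0 < 1 + ε := by linarith [hε.1]
  have hprod : 1 / (1 + ε) ≤ u ℓ * ⨅ j, v j := hsup ▸ hmaxmin
  have hprod_pos : 0 < u ℓ * ⨅ j, v j := lt_of_lt_of_le (by positivity) hprod
  have hupper : 1 / (u ℓ * ⨅ j, v j) ≤ 1 + ε := (one_div_le hprod_pos hε₁).mpr hprod
  have hlower : 1 - ε ≤ (1 / r ℓ) * ∑ j, Phat ℓ j := by
    linarith [(abs_le.mp (hrowε ℓ)).1]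
  rw [one_div_mul_sum_mul_div_sub_one _ _ _ (left_ne_zero_of_mul hprod_pos.ne')
    (right_ne_zero_of_mul hprod_pos.ne') (hr ℓ).ne' (hrow ℓ)]
  linarith

theorem argmax_row_sum_bound
    (M N : ℕ) (hM : 0 < M) (hN : 0 < N)
    (Phat : Fin M → Fin N → ℝ) (u : Fin M → ℝ) (v : Fin N → ℝ)
    (r : Fin M → ℝ) (ε : ℝ)
    (hε : ε ∈ Set.Ioo (0 : ℝ) 1)
    (hP : ∀ i j, 0 < Phat i j)
    (hu : ∀ i, 0 < u i) (hv : ∀ j, 0 < v j)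
    (hr : ∀ i, 0 < r i)
    (hrow : ∀ i, ∑ j, u i * Phat i j * v j = r i)
    (hrowε : ∀ i, |(1 / r i) * ∑ j, Phat i j - 1| ≤ ε)
    (hmaxmin : 1 / (1 + ε) ≤ (⨆ i, u i) * (⨅ j, v j))
    (ℓ : Fin M) (hℓ : ∀ i, u i ≤ u ℓ) :
    (1 / r ℓ) * ∑ j, Phat ℓ j * (v j / (⨅ j', v j') - 1) ≤ 2 * ε :=
  argmax_row_sum_bound_general M N Phat u v r ε hε hr hrow hrowε hmaxmin ℓ hℓ
end

section
/- Let Ã be a random M×N matrix with independent entries in each row and each column, Ã_{i,j} ∈ [a_{i,j}, b_{i,j}] almost surely, and A = E[Ã]. Let (x,y) be positive vectors scaling A to row sums r and column sums c with ‖r‖₁ = ‖c‖₁ = s, a = min a_{i,j} > 0, b = max b_{i,j}. Then for every ε > 0 and each i: Pr{ |(1/r_i) ∑_j x_i Ã_{i,j} y_j − 1| > ε } ≤ 2 exp( −2ε²s² / (C² ∑_j c_j² (b_{i,j} − a_{i,j})²) ), where C = b/a². -/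
open Finset MeasureTheory ProbabilityTheory

/-!
Each normalized row sum `(1 / r i) ∑ⱼ x i Ãᵢⱼ y j` is a sum of independent bounded variables with
mean `1`, so Hoeffding's inequality applies. The `j`-th summand ranges over an interval of length
`(x i y j / r i) (bᵢⱼ - aᵢⱼ)`, and the bound `x i y j ≤ (b / a²) r i c j / s` on the scaling factors
turns the Hoeffding exponent into the one of the statement. That bound comes from comparing each
entry of `A` with `a` and `b`: `a x i ∑ y ≤ r i`, `a y j ∑ x ≤ c j` and `s = ∑ c ≤ b ∑ x ∑ y`.
-/

section Hoeffding

variable {Ω ι : Type*} [MeasurableSpace Ω] {μ : Measure Ω} [IsProbabilityMeasure μ]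
  {X : ι → Ω → ℝ} {l u : ι → ℝ} {ε : ℝ}

theorem measure_lt_abs_sum_sub_integral_le (hX : ∀ j, AEMeasurable (X j) μ)
    (hindep : iIndepFun X μ) (s : Finset ι) (hbdd : ∀ j, ∀ᵐ ω ∂μ, X j ω ∈ Set.Icc (l j) (u j))
    (hε : 0 ≤ ε) :
    μ {ω | ε < |∑ j ∈ s, X j ω - ∑ j ∈ s, μ[X j]|} ≤
      ENNReal.ofReal (2 * Real.exp (-2 * ε ^ 2 / ∑ j ∈ s, (u j - l j) ^ 2)) := by
  set Y : ι → Ω → ℝ := fun j ω => X j ω - μ[X j]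
  have hY : ∀ j ∈ s, HasSubgaussianMGF (Y j) ((‖u j - l j‖₊ / 2) ^ 2) μ :=
    fun j _ => hasSubgaussianMGF_of_mem_Icc (hX j) (hbdd j)
  have hindepY : iIndepFun Y μ :=
    hindep.comp (fun j v => v - ∫ ω, X j ω ∂μ) fun _ => measurable_id.sub_const _
  have hupper : μ.real {ω | ε ≤ ∑ j ∈ s, Y j ω} ≤
      Real.exp (-ε ^ 2 / (2 * ∑ j ∈ s, (‖u j - l j‖₊ / 2) ^ 2 : NNReal)) :=
    HasSubgaussianMGF.measure_sum_ge_le_of_iIndepFun hindepY hY hε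
  have hlower : μ.real {ω | ε ≤ ∑ j ∈ s, -Y j ω} ≤
      Real.exp (-ε ^ 2 / (2 * ∑ j ∈ s, (‖u j - l j‖₊ / 2) ^ 2 : NNReal)) :=
    HasSubgaussianMGF.measure_sum_ge_le_of_iIndepFun
      (hindepY.comp (fun _ v => -v) fun _ => measurable_neg) (fun j hj => (hY j hj).neg) hε
  have hexponent : -ε ^ 2 / (2 * ((∑ j ∈ s, (‖u j - l j‖₊ / 2) ^ 2 : NNReal) : ℝ)) =
      -2 * ε ^ 2 / ∑ j ∈ s, (u j - l j) ^ 2 := by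
    have hparam : 2 * ((∑ j ∈ s, (‖u j - l j‖₊ / 2) ^ 2 : NNReal) : ℝ) =
        (∑ j ∈ s, (u j - l j) ^ 2) / 2 := by
      push_cast
      rw [mul_sum, sum_div]
      exact sum_congr rfl fun j _ => by rw [Real.norm_eq_abs, div_pow, sq_abs]; ring
    rw [hparam, div_div_eq_mul_div]
    ring
  have hsub : {ω | ε < |∑ j ∈ s, X j ω - ∑ j ∈ s, μ[X j]|} ⊆
      {ω | ε ≤ ∑ j ∈ s, Y j ω} ∪ {ω | ε ≤ ∑ j ∈ s, -Y j ω} := by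
    intro ω hω
    simp only [Y, sum_sub_distrib, sum_neg_distrib, Set.mem_ofPred_eq, Set.mem_union] at hω ⊢
    rcases lt_abs.1 hω with h | h
    · exact Or.inl h.le
    · exact Or.inr (by linarith)
  rw [ENNReal.le_ofReal_iff_toReal_le (measure_ne_top _ _) (by positivity), ← measureReal_def,
    ← hexponent, two_mul]
  exact (measureReal_mono hsub).trans ((measureReal_union_le _ _).trans (add_le_add hupper hlower))

theorem measure_lt_abs_weighted_sum_sub_integral_le (hX : ∀ j, AEMeasurable (X j) μ)
    (hindep : iIndepFun X μ) (s : Finset ι) (hbdd : ∀ j, ∀ᵐ ω ∂μ, X j ω ∈ Set.Icc (l j) (u j))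
    {w κ : ι → ℝ} (hw : ∀ j, w j ∈ Set.Icc 0 (κ j)) (hε : 0 ≤ ε) :
    μ {ω | ε < |∑ j ∈ s, w j * X j ω - ∑ j ∈ s, w j * μ[X j]|} ≤
      ENNReal.ofReal (2 * Real.exp (-2 * ε ^ 2 / ∑ j ∈ s, (κ j * (u j - l j)) ^ 2)) := by
  -- Enlarging the range of `w j * X j` to length `κ j * (u j - l j)` removes `w` from the exponent.
  have hbdd' : ∀ j, ∀ᵐ ω ∂μ, w j * X j ω ∈ Set.Icc (w j * l j) (w j * l j + κ j * (u j - l j)) :=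
    fun j => by
      filter_upwards [hbdd j] with ω hω
      refine ⟨mul_le_mul_of_nonneg_left hω.1 (hw j).1, ?_⟩
      nlinarith [mul_le_mul_of_nonneg_left hω.2 (hw j).1,
        mul_le_mul_of_nonneg_right (hw j).2 (sub_nonneg.2 (hω.1.trans hω.2))]
  have key := measure_lt_abs_sum_sub_integral_le (fun j => (hX j).const_mul (w j))
    (hindep.comp (fun j v => w j * v) fun j => measurable_const_mul _) s hbdd' hε
  simpa only [integral_const_mul, add_sub_cancel_left] using key

end Hoeffding

section Scaling

variable {ι κ : Type*} [Fintype ι] [Fintype κ] {A : ι → κ → ℝ} {x : ι → ℝ} {y : κ → ℝ}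
  {r : ι → ℝ} {c : κ → ℝ} {a b s : ℝ}

theorem scaling_factor_mul_le (ha : 0 < a) (hA : ∀ i j, A i j ∈ Set.Icc a b)
    (hx : ∀ i, 0 ≤ x i) (hy : ∀ j, 0 ≤ y j)
    (hrow : ∀ i, ∑ j, x i * A i j * y j = r i) (hcol : ∀ j, ∑ i, x i * A i j * y j = c j)
    (hs : ∑ j, c j = s) (i : ι) (j : κ) :
    x i * y j * s ≤ b / a ^ 2 * (r i * c j) := by
  have hxy : ∀ i j, 0 ≤ x i * y j := fun i j => mul_nonneg (hx i) (hy j)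
  have entry_ge : ∀ i j, a * (x i * y j) ≤ x i * A i j * y j := fun i j => by
    nlinarith [mul_le_mul_of_nonneg_left (hA i j).1 (hxy i j)]
  have entry_le : ∀ i j, x i * A i j * y j ≤ b * (x i * y j) := fun i j => by
    nlinarith [mul_le_mul_of_nonneg_left (hA i j).2 (hxy i j)]
  have hrow_ge : a * (x i * ∑ j, y j) ≤ r i := by
    rw [← hrow, mul_sum, mul_sum]
    exact sum_le_sum fun j _ => entry_ge i j
  have hcol_ge : a * (y j * ∑ i, x i) ≤ c j := by
    rw [← hcol, mul_sum, mul_sum]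
    exact sum_le_sum fun i _ => by rw [mul_comm (y j)]; exact entry_ge i j
  have hs_le : s ≤ b * ((∑ i, x i) * ∑ j, y j) := by
    rw [← hs, sum_mul_sum, sum_comm, mul_sum]
    refine sum_le_sum fun j _ => ?_
    rw [← hcol, mul_sum]
    exact sum_le_sum fun i _ => entry_le i j
  have hC : 0 ≤ b / a ^ 2 := div_nonneg (ha.le.trans ((hA i j).1.trans (hA i j).2)) (sq_nonneg a)
  calc x i * y j * s ≤ x i * y j * (b * ((∑ i, x i) * ∑ j, y j)) :=
        mul_le_mul_of_nonneg_left hs_le (hxy i j)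
    _ = b / a ^ 2 * ((a * (x i * ∑ j, y j)) * (a * (y j * ∑ i, x i))) := by
        field_simp
    _ ≤ b / a ^ 2 * (r i * c j) :=
        mul_le_mul_of_nonneg_left (mul_le_mul hrow_ge hcol_ge
          (mul_nonneg ha.le (mul_nonneg (hy j) (sum_nonneg fun i _ => hx i)))
          ((mul_nonneg ha.le (mul_nonneg (hx i) (sum_nonneg fun j _ => hy j))).trans hrow_ge)) hC

end Scaling

theorem concentration_of_row_sums_general
    (M N : ℕ) {Ω : Type*} [MeasurableSpace Ω] (μ : Measure Ω) [IsProbabilityMeasure μ]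
    (At : Fin M → Fin N → Ω → ℝ)
    (aa bb : Fin M → Fin N → ℝ) (a b s C : ℝ)
    (A : Fin M → Fin N → ℝ)
    (x : Fin M → ℝ) (y : Fin N → ℝ) (r : Fin M → ℝ) (c : Fin N → ℝ)
    (hmeas : ∀ i j, Measurable (At i j))
    (hrowIndep : ∀ i, iIndepFun (fun j => At i j) μ)
    (hbdd : ∀ i j, ∀ᵐ ω ∂μ, At i j ω ∈ Set.Icc (aa i j) (bb i j))
    (hE : ∀ i j, A i j = ∫ ω, At i j ω ∂μ)
    (ha : a = ⨅ p : Fin M × Fin N, aa p.1 p.2) (ha0 : 0 < a)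
    (hb : b = ⨆ p : Fin M × Fin N, bb p.1 p.2)
    (hC : C = b / a ^ 2)
    (hr : ∀ i, 0 < r i)
    (hs_r : ∑ i, r i = s) (hs_c : ∑ j, c j = s)
    (hx : ∀ i, 0 < x i) (hy : ∀ j, 0 < y j)
    (hrow : ∀ i, ∑ j, x i * A i j * y j = r i)
    (hcol : ∀ j, ∑ i, x i * A i j * y j = c j) :
    ∀ ε > (0 : ℝ), ∀ i,
      μ {ω | ε < |(1 / r i) * ∑ j, x i * At i j ω * y j - 1|} ≤
        ENNReal.ofReal (2 * Real.exp
          (-2 * ε ^ 2 * s ^ 2 / (C ^ 2 * ∑ j, (c j) ^ 2 * (bb i j - aa i j) ^ 2))) := by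
  intro ε hε i
  have hA : ∀ i j, A i j ∈ Set.Icc a b := fun i j => by
    have hmem := (convex_Icc _ _).integral_mem isClosed_Icc (hbdd i j)
      (.of_mem_Icc _ _ (hmeas i j).aemeasurable (hbdd i j))
    rw [hE]
    exact ⟨(ha ▸ ciInf_le (Set.finite_range _).bddBelow (i, j)).trans hmem.1,
      hmem.2.trans (hb ▸ le_ciSup (f := fun p : Fin M × Fin N => bb p.1 p.2)
        (Set.finite_range _).bddAbove (i, j))⟩
  have hs : 0 < s := hs_r ▸ sum_pos (fun i _ => hr i) ⟨i, mem_univ i⟩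
  have hweight : ∀ j, x i * y j / r i ∈ Set.Icc 0 (C * c j / s) := fun j => by
    refine ⟨div_nonneg (mul_pos (hx i) (hy j)).le (hr i).le, ?_⟩
    rw [le_div_iff₀ hs, div_mul_eq_mul_div, div_le_iff₀ (hr i), hC]
    linarith [scaling_factor_mul_le ha0 hA (fun i => (hx i).le) (fun j => (hy j).le) hrow hcol
      hs_c i j]
  have hmean : ∑ j, x i * y j / r i * ∫ ω, At i j ω ∂μ = 1 := by
    rw [← div_self (hr i).ne', ← hrow, sum_div]
    exact sum_congr rfl fun j _ => by rw [hE]; ring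
  have hwidth : ∑ j, (C * c j / s * (bb i j - aa i j)) ^ 2 =
      C ^ 2 * (∑ j, c j ^ 2 * (bb i j - aa i j) ^ 2) / s ^ 2 := by
    rw [mul_sum, sum_div]
    exact sum_congr rfl fun j _ => by field_simp
  calc μ {ω | ε < |(1 / r i) * ∑ j, x i * At i j ω * y j - 1|}
      = μ {ω | ε < |∑ j, x i * y j / r i * At i j ω -
          ∑ j, x i * y j / r i * ∫ ω, At i j ω ∂μ|} := by
        simp_rw [hmean, mul_sum, div_mul_eq_mul_div, one_mul, mul_right_comm _ (At i _ _)]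
    _ ≤ _ := measure_lt_abs_weighted_sum_sub_integral_le (fun j => (hmeas i j).aemeasurable)
        (hrowIndep i) univ (hbdd i) hweight hε.le
    _ = _ := by rw [hwidth, div_div_eq_mul_div]

theorem concentration_of_row_sums
    (M N : ℕ) {Ω : Type*} [MeasurableSpace Ω] (μ : Measure Ω) [IsProbabilityMeasure μ]
    (At : Fin M → Fin N → Ω → ℝ)
    (aa bb : Fin M → Fin N → ℝ) (a b s C : ℝ)
    (A : Fin M → Fin N → ℝ)
    (x : Fin M → ℝ) (y : Fin N → ℝ) (r : Fin M → ℝ) (c : Fin N → ℝ)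
    (hmeas : ∀ i j, Measurable (At i j))
    (hrowIndep : ∀ i, iIndepFun (fun j => At i j) μ)
    (hcolIndep : ∀ j, iIndepFun (fun i => At i j) μ)
    (hbdd : ∀ i j, ∀ᵐ ω ∂μ, At i j ω ∈ Set.Icc (aa i j) (bb i j))
    (hE : ∀ i j, A i j = ∫ ω, At i j ω ∂μ)
    (ha : a = ⨅ p : Fin M × Fin N, aa p.1 p.2) (ha0 : 0 < a)
    (hb : b = ⨆ p : Fin M × Fin N, bb p.1 p.2)
    (hC : C = b / a ^ 2)
    (hr : ∀ i, 0 < r i) (hc : ∀ j, 0 < c j)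
    (hs_r : ∑ i, r i = s) (hs_c : ∑ j, c j = s)
    (hx : ∀ i, 0 < x i) (hy : ∀ j, 0 < y j)
    (hrow : ∀ i, ∑ j, x i * A i j * y j = r i)
    (hcol : ∀ j, ∑ i, x i * A i j * y j = c j) :
    ∀ ε > (0 : ℝ), ∀ i,
      μ {ω | ε < |(1 / r i) * ∑ j, x i * At i j ω * y j - 1|} ≤
        ENNReal.ofReal (2 * Real.exp
          (-2 * ε ^ 2 * s ^ 2 / (C ^ 2 * ∑ j, (c j) ^ 2 * (bb i j - aa i j) ^ 2))) :=
  concentration_of_row_sums_general M N μ At aa bb a b s C A x y r c hmeas hrowIndep hbdd hE ha ha0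
    hb hC hr hs_r hs_c hx hy hrow hcol
end

section
/- If positive vectors x, y scale a matrix A with entries in [a,b] (0 < a ≤ b) to row sums r and column sums c with ‖r‖₁ = ‖c‖₁ = s, then for all i, j: x_i y_j ≤ (b/a²) · (r_i c_j)/s. -/
/-! Bounding the entries of `A` below by `a` gives `r i ≥ a · x i · ∑ y` and
`c j ≥ a · y j · ∑ x`, and bounding them above by `b` gives `s ≤ b · (∑ x) · (∑ y)`.
Multiplying the first two and combining with the third, the unknown totals `∑ x` and `∑ y`
cancel: `a² · x i · y j · s ≤ b · r i · c j`. -/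

open Finset

section Scaling

variable {ι κ : Type*} {A : ι → κ → ℝ} {x : ι → ℝ} {y : κ → ℝ} {a b : ℝ}

theorem mul_sum_le_rowSum [Fintype κ] (i : ι) (hA : ∀ j, a ≤ A i j) (hx : 0 ≤ x i)
    (hy : ∀ j, 0 ≤ y j) :
    a * x i * ∑ j, y j ≤ ∑ j, x i * A i j * y j := by
  rw [mul_sum]
  refine sum_le_sum fun j _ => ?_
  nlinarith [mul_nonneg hx (hy j), hA j]

theorem mul_sum_le_colSum [Fintype ι] (j : κ) (hA : ∀ i, a ≤ A i j) (hx : ∀ i, 0 ≤ x i)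
    (hy : 0 ≤ y j) :
    a * y j * ∑ i, x i ≤ ∑ i, x i * A i j * y j := by
  rw [mul_sum]
  refine sum_le_sum fun i _ => ?_
  nlinarith [mul_nonneg (hx i) hy, hA i]

theorem totalSum_le [Fintype ι] [Fintype κ] (hA : ∀ i j, A i j ≤ b) (hx : ∀ i, 0 ≤ x i)
    (hy : ∀ j, 0 ≤ y j) :
    ∑ i, ∑ j, x i * A i j * y j ≤ b * (∑ i, x i) * ∑ j, y j := by
  rw [mul_assoc, sum_mul_sum, mul_sum]
  refine sum_le_sum fun i _ => ?_
  rw [mul_sum]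
  refine sum_le_sum fun j _ => ?_
  nlinarith [mul_nonneg (hx i) (hy j), hA i j]

theorem sq_mul_mul_totalSum_le [Fintype ι] [Fintype κ] (ha : 0 ≤ a) (hlo : ∀ i j, a ≤ A i j)
    (hhi : ∀ i j, A i j ≤ b) (hx : ∀ i, 0 ≤ x i) (hy : ∀ j, 0 ≤ y j) (i : ι) (j : κ) :
    a ^ 2 * (x i * y j) * ∑ i, ∑ j, x i * A i j * y j ≤
      b * ((∑ j, x i * A i j * y j) * ∑ i, x i * A i j * y j) := by
  have hb : 0 ≤ b := ha.trans ((hlo i j).trans (hhi i j))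
  have hrow := mul_sum_le_rowSum i (hlo i) (hx i) hy
  have hcol := mul_sum_le_colSum j (hlo · j) hx (hy j)
  have hrow_nonneg : 0 ≤ a * x i * ∑ j, y j :=
    mul_nonneg (mul_nonneg ha (hx i)) (sum_nonneg fun j _ => hy j)
  have hcol_nonneg : 0 ≤ a * y j * ∑ i, x i :=
    mul_nonneg (mul_nonneg ha (hy j)) (sum_nonneg fun i _ => hx i)
  calc a ^ 2 * (x i * y j) * ∑ i, ∑ j, x i * A i j * y j
      ≤ a ^ 2 * (x i * y j) * (b * (∑ i, x i) * ∑ j, y j) :=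
        mul_le_mul_of_nonneg_left (totalSum_le hhi hx hy) (by positivity [hx i, hy j])
    _ = b * ((a * x i * ∑ j, y j) * (a * y j * ∑ i, x i)) := by ring
    _ ≤ b * ((∑ j, x i * A i j * y j) * ∑ i, x i * A i j * y j) :=
        mul_le_mul_of_nonneg_left (mul_le_mul hrow hcol hcol_nonneg (hrow_nonneg.trans hrow)) hb

end Scaling

theorem scaling_factors_product_bound_general
    (M N : ℕ) (A : Fin M → Fin N → ℝ) (a b s : ℝ)
    (x : Fin M → ℝ) (y : Fin N → ℝ) (r : Fin M → ℝ) (c : Fin N → ℝ)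
    (ha : 0 < a)
    (hA : ∀ i j, a ≤ A i j ∧ A i j ≤ b)
    (hr : ∀ i, 0 < r i)
    (hs_r : ∑ i, r i = s)
    (hx : ∀ i, 0 < x i) (hy : ∀ j, 0 < y j)
    (hrow : ∀ i, ∑ j, x i * A i j * y j = r i)
    (hcol : ∀ j, ∑ i, x i * A i j * y j = c j) :
    ∀ i j, x i * y j ≤ (b / a ^ 2) * (r i * c j) / s := by
  intro i j
  have hs : 0 < s := hs_r ▸ sum_pos (fun i _ => hr i) ⟨i, mem_univ i⟩
  have key := sq_mul_mul_totalSum_le ha.le (fun i j => (hA i j).1) (fun i j => (hA i j).2)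
    (fun i => (hx i).le) (fun j => (hy j).le) i j
  simp only [hrow, hcol, hs_r] at key
  rw [div_mul_eq_mul_div, div_div, le_div_iff₀ (by positivity)]
  linarith

theorem scaling_factors_product_bound
    (M N : ℕ) (A : Fin M → Fin N → ℝ) (a b s : ℝ)
    (x : Fin M → ℝ) (y : Fin N → ℝ) (r : Fin M → ℝ) (c : Fin N → ℝ)
    (ha : 0 < a) (hab : a ≤ b)
    (hA : ∀ i j, a ≤ A i j ∧ A i j ≤ b)
    (hr : ∀ i, 0 < r i) (hc : ∀ j, 0 < c j)
    (hs_r : ∑ i, r i = s) (hs_c : ∑ j, c j = s)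
    (hx : ∀ i, 0 < x i) (hy : ∀ j, 0 < y j)
    (hrow : ∀ i, ∑ j, x i * A i j * y j = r i)
    (hcol : ∀ j, ∑ i, x i * A i j * y j = c j) :
    ∀ i j, x i * y j ≤ (b / a ^ 2) * (r i * c j) / s :=
  scaling_factors_product_bound_general M N A a b s x y r c ha hA hr hs_r hx hy hrow hcol
end

section
/- If positive vectors x, y (with ∑_i x_i = ∑_j y_j) scale a matrix A with entries in [a,b], 0 < a ≤ b, to row sums r and column sums c with ‖r‖₁=‖c‖₁=s, and positive vectors x̃, ỹ (with ∑_i x̃_i = ∑_j ỹ_j) scale another matrix Ã with entries in [a,b] to the same row and column sums, then x̃_i/x_i ≤ (b/a)^{3/2} and ỹ_j/y_j ≤ (b/a)^{3/2} for all i, j. -/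
/-!
With `Y = ∑ⱼ yⱼ`, entries in `[a, b]` pin each row sum between `a xᵢ Y` and `b xᵢ Y`. Hence
`x̃ᵢ / xᵢ ≤ (b / a) (Y / Ỹ)`, and summing the row bounds with `∑ᵢ xᵢ = Y` gives
`a Y² ≤ ∑ᵢ rᵢ ≤ b Ỹ²`, i.e. `Y / Ỹ ≤ √(b / a)`. Columns follow by transposing.
-/

open Finset

lemma le_rpow_three_halves_of_le_mul {t κ q : ℝ} (ht : t ≤ κ * q)
    (hqκ : q ^ 2 ≤ κ) : t ≤ κ ^ ((3 : ℝ) / 2) := by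
  have hκ : 0 ≤ κ := (sq_nonneg q).trans hqκ
  calc t ≤ κ * q := ht
    _ ≤ κ * √κ := by gcongr; exact Real.le_sqrt_of_sq_le hqκ
    _ = κ ^ ((3 : ℝ) / 2) := by
      rw [Real.sqrt_eq_rpow, ← Real.rpow_one_add' hκ (by norm_num)]
      norm_num

lemma sum_mul_mul_mem_Icc {κ : Type*} [Fintype κ] {a b u : ℝ} {w v : κ → ℝ}
    (hw : ∀ j, a ≤ w j ∧ w j ≤ b) (hu : 0 ≤ u) (hv : ∀ j, 0 ≤ v j) :
    a * (u * ∑ j, v j) ≤ ∑ j, u * w j * v j ∧ ∑ j, u * w j * v j ≤ b * (u * ∑ j, v j) := by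
  have hcomm : ∀ j, u * w j * v j = w j * (u * v j) := fun j => by ring
  simp only [hcomm, mul_sum]
  exact ⟨sum_le_sum fun j _ => mul_le_mul_of_nonneg_right (hw j).1 (mul_nonneg hu (hv j)),
    sum_le_sum fun j _ => mul_le_mul_of_nonneg_right (hw j).2 (mul_nonneg hu (hv j))⟩

section RowScaling

variable {ι κ : Type*} [Fintype ι] [Fintype κ] {A At : ι → κ → ℝ} {a b : ℝ}
  {x xt : ι → ℝ} {y yt : κ → ℝ} {r : ι → ℝ}

lemma mul_sq_sum_le_of_row_sums (hA : ∀ i j, a ≤ A i j ∧ A i j ≤ b)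
    (hAt : ∀ i j, a ≤ At i j ∧ At i j ≤ b) (hx : ∀ i, 0 ≤ x i) (hy : ∀ j, 0 ≤ y j)
    (hxt : ∀ i, 0 ≤ xt i) (hyt : ∀ j, 0 ≤ yt j)
    (hnorm : ∑ i, x i = ∑ j, y j) (hnormt : ∑ i, xt i = ∑ j, yt j)
    (hrow : ∀ i, ∑ j, x i * A i j * y j = r i) (hrowt : ∀ i, ∑ j, xt i * At i j * yt j = r i) :
    a * (∑ j, y j) ^ 2 ≤ b * (∑ j, yt j) ^ 2 :=
  calc a * (∑ j, y j) ^ 2 = ∑ i, a * (x i * ∑ j, y j) := by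
        rw [← mul_sum, ← sum_mul, hnorm, sq]
    _ ≤ ∑ i, r i := sum_le_sum fun i _ =>
        hrow i ▸ (sum_mul_mul_mem_Icc (hA i) (hx i) hy).1
    _ ≤ ∑ i, b * (xt i * ∑ j, yt j) := sum_le_sum fun i _ =>
        hrowt i ▸ (sum_mul_mul_mem_Icc (hAt i) (hxt i) hyt).2
    _ = b * (∑ j, yt j) ^ 2 := by
        rw [← mul_sum, ← sum_mul, hnormt, sq]

lemma div_le_rpow_of_row_sums (ha : 0 < a) (hA : ∀ i j, a ≤ A i j ∧ A i j ≤ b)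
    (hAt : ∀ i j, a ≤ At i j ∧ At i j ≤ b) (hx : ∀ i, 0 ≤ x i) (hy : ∀ j, 0 ≤ y j)
    (hxt : ∀ i, 0 ≤ xt i) (hyt : ∀ j, 0 ≤ yt j)
    (hnorm : ∑ i, x i = ∑ j, y j) (hnormt : ∑ i, xt i = ∑ j, yt j)
    (hrow : ∀ i, ∑ j, x i * A i j * y j = r i) (hrowt : ∀ i, ∑ j, xt i * At i j * yt j = r i)
    (i : ι) (hxi : 0 < x i) :
    xt i / x i ≤ (b / a) ^ ((3 : ℝ) / 2) := by
  set Y := ∑ j, y j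
  set Yt := ∑ j, yt j
  have hY : 0 < Y := hnorm ▸ hxi.trans_le (single_le_sum (fun k _ => hx k) (mem_univ i))
  have hmass : a * Y ^ 2 ≤ b * Yt ^ 2 :=
    mul_sq_sum_le_of_row_sums hA hAt hx hy hxt hyt hnorm hnormt hrow hrowt
  have hYt : 0 < Yt := by
    have hpos : 0 < b * Yt ^ 2 := (by positivity : 0 < a * Y ^ 2).trans_le hmass
    exact (sum_nonneg fun j _ => hyt j).lt_of_ne'
      (pow_ne_zero_iff two_ne_zero |>.mp (right_ne_zero_of_mul hpos.ne'))
  have hcross : xt i * (a * Yt) ≤ x i * (b * Y) := by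
    have hlow := (sum_mul_mul_mem_Icc (hAt i) (hxt i) hyt).1
    have hup := (sum_mul_mul_mem_Icc (hA i) hxi.le hy).2
    rw [hrowt i] at hlow
    rw [hrow i] at hup
    linarith
  refine le_rpow_three_halves_of_le_mul (q := Y / Yt) ?_ ?_
  · rw [div_mul_div_comm, div_le_div_iff₀ hxi (by positivity)]
    linarith
  · rw [div_pow, div_le_div_iff₀ (by positivity) ha]
    linarith

end RowScaling

theorem ratio_of_scaling_factors_bound_general
    (M N : ℕ) (A At : Fin M → Fin N → ℝ) (a b : ℝ)
    (x xt : Fin M → ℝ) (y yt : Fin N → ℝ) (r : Fin M → ℝ) (c : Fin N → ℝ)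
    (ha : 0 < a)
    (hA : ∀ i j, a ≤ A i j ∧ A i j ≤ b)
    (hAt : ∀ i j, a ≤ At i j ∧ At i j ≤ b)
    (hx : ∀ i, 0 < x i) (hy : ∀ j, 0 < y j)
    (hxt : ∀ i, 0 < xt i) (hyt : ∀ j, 0 < yt j)
    (hnorm : ∑ i, x i = ∑ j, y j)
    (hnormt : ∑ i, xt i = ∑ j, yt j)
    (hrow : ∀ i, ∑ j, x i * A i j * y j = r i)
    (hcol : ∀ j, ∑ i, x i * A i j * y j = c j)
    (hrowt : ∀ i, ∑ j, xt i * At i j * yt j = r i)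
    (hcolt : ∀ j, ∑ i, xt i * At i j * yt j = c j) :
    (∀ i, xt i / x i ≤ (b / a) ^ ((3 : ℝ) / 2)) ∧
    (∀ j, yt j / y j ≤ (b / a) ^ ((3 : ℝ) / 2)) := by
  have transpose : ∀ (u : Fin M → ℝ) (B : Fin M → Fin N → ℝ) (v : Fin N → ℝ) j,
      ∑ i, v j * B i j * u i = ∑ i, u i * B i j * v j :=
    fun u B v j => sum_congr rfl fun i _ => by ring
  refine ⟨fun i => div_le_rpow_of_row_sums ha hA hAt (fun k => (hx k).le) (fun k => (hy k).le)
      (fun k => (hxt k).le) (fun k => (hyt k).le) hnorm hnormt hrow hrowt i (hx i),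
    fun j => div_le_rpow_of_row_sums ha (fun j i => hA i j) (fun j i => hAt i j)
      (fun k => (hy k).le) (fun k => (hx k).le) (fun k => (hyt k).le) (fun k => (hxt k).le)
      hnorm.symm hnormt.symm (fun j => (transpose x A y j).trans (hcol j))
      (fun j => (transpose xt At yt j).trans (hcolt j)) j (hy j)⟩

theorem ratio_of_scaling_factors_bound
    (M N : ℕ) (A At : Fin M → Fin N → ℝ) (a b s : ℝ)
    (x xt : Fin M → ℝ) (y yt : Fin N → ℝ) (r : Fin M → ℝ) (c : Fin N → ℝ)
    (ha : 0 < a) (hab : a ≤ b)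
    (hA : ∀ i j, a ≤ A i j ∧ A i j ≤ b)
    (hAt : ∀ i j, a ≤ At i j ∧ At i j ≤ b)
    (hr : ∀ i, 0 < r i) (hc : ∀ j, 0 < c j)
    (hs_r : ∑ i, r i = s) (hs_c : ∑ j, c j = s)
    (hx : ∀ i, 0 < x i) (hy : ∀ j, 0 < y j)
    (hxt : ∀ i, 0 < xt i) (hyt : ∀ j, 0 < yt j)
    (hnorm : ∑ i, x i = ∑ j, y j)
    (hnormt : ∑ i, xt i = ∑ j, yt j)
    (hrow : ∀ i, ∑ j, x i * A i j * y j = r i)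
    (hcol : ∀ j, ∑ i, x i * A i j * y j = c j)
    (hrowt : ∀ i, ∑ j, xt i * At i j * yt j = r i)
    (hcolt : ∀ j, ∑ i, xt i * At i j * yt j = c j) :
    (∀ i, xt i / x i ≤ (b / a) ^ ((3 : ℝ) / 2)) ∧
    (∀ j, yt j / y j ≤ (b / a) ^ ((3 : ℝ) / 2)) :=
  ratio_of_scaling_factors_bound_general M N A At a b x xt y yt r c ha hA hAt hx hy hxt hyt hnorm
    hnormt hrow hcol hrowt hcolt
end

section
/- Let P̃ = D(x̃) Ã D(ỹ) and P = D(x) A D(y) where Ã, A have entries in [a,b], 0 < a ≤ b, and both matrices are scaled (by positive factor pairs) to row sums r and column sums c with ‖r‖₁ = ‖c‖₁ = s. Then ‖P̃ − P‖₂ ≤ 2(b/a)² · ‖r‖₂‖c‖₂/s ≤ 2(b/a)² · √M max_i r_i · √N max_j c_j / s. -/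
/-!
A scaled matrix `P = D(x) A D(y)` satisfies `Pᵢⱼ ≤ (b/a)² rᵢ cⱼ / s`, so it is entrywise dominated
by a rank-one matrix and its spectral norm, bounded by its Frobenius norm, is at most
`(b/a)² ‖r‖₂ ‖c‖₂ / s`. The triangle inequality for `P̃ - P` gives the factor 2, and
`‖r‖₂ ≤ √M maxᵢ rᵢ`, `‖c‖₂ ≤ √N maxⱼ cⱼ` give the second bound.
-/

open Finset
open scoped Matrix.Norms.L2Operator

namespace Matrix

variable {m n : Type*} [Fintype m] [Fintype n] [DecidableEq n]

theorem l2_opNorm_le_sqrt_sum_sq (P : Matrix m n ℝ) :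
    ‖P‖ ≤ √(∑ i, ∑ j, P i j ^ 2) := by
  rw [l2_opNorm_def]
  refine ContinuousLinearMap.opNorm_le_bound _ (Real.sqrt_nonneg _) fun v => ?_
  rw [EuclideanSpace.norm_eq, EuclideanSpace.norm_eq, ← Real.sqrt_mul (by positivity), sum_mul]
  refine Real.sqrt_le_sqrt <| sum_le_sum fun i _ => ?_
  simpa [Real.norm_eq_abs, sq_abs, mulVec, dotProduct] using
    sum_mul_sq_le_sq_mul_sq univ (P i) (fun j => v j)

theorem l2_opNorm_le_of_abs_le_mul {P : Matrix m n ℝ} {k : ℝ} {u : m → ℝ} {v : n → ℝ}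
    (hk : 0 ≤ k) (hP : ∀ i j, |P i j| ≤ k * u i * v j) :
    ‖P‖ ≤ k * (√(∑ i, u i ^ 2) * √(∑ j, v j ^ 2)) := by
  calc ‖P‖ ≤ √(∑ i, ∑ j, P i j ^ 2) := P.l2_opNorm_le_sqrt_sum_sq
    _ ≤ √(∑ i, ∑ j, (k * u i * v j) ^ 2) :=
        Real.sqrt_le_sqrt <| sum_le_sum fun i _ => sum_le_sum fun j _ =>
          sq_le_sq' (abs_le.1 (hP i j)).1 (abs_le.1 (hP i j)).2
    _ = √(k ^ 2 * ((∑ i, u i ^ 2) * ∑ j, v j ^ 2)) := by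
        simp_rw [sum_mul_sum, mul_sum, mul_pow, mul_assoc]
    _ = k * (√(∑ i, u i ^ 2) * √(∑ j, v j ^ 2)) := by
        rw [Real.sqrt_mul (sq_nonneg k), Real.sqrt_sq hk, Real.sqrt_mul (by positivity)]

end Matrix

section Scaling

variable {ι κ : Type*} [Fintype ι] [Fintype κ] {A : ι → κ → ℝ} {a b s : ℝ}
  {x : ι → ℝ} {y : κ → ℝ} {r : ι → ℝ} {c : κ → ℝ}

/-- Row and column sums give `a xᵢ ∑ y ≤ rᵢ`, `a yⱼ ∑ x ≤ cⱼ` and `s ≤ b ∑ x ∑ y`; the product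
of the first two, combined with the third, bounds `b xᵢ yⱼ s`. -/
theorem scaled_entry_le (ha : 0 < a) (hA : ∀ i j, a ≤ A i j ∧ A i j ≤ b)
    (hx : ∀ i, 0 < x i) (hy : ∀ j, 0 < y j)
    (hrow : ∀ i, ∑ j, x i * A i j * y j = r i) (hcol : ∀ j, ∑ i, x i * A i j * y j = c j)
    (hs : ∑ j, c j = s) (i : ι) (j : κ) :
    x i * A i j * y j ≤ (b / a) ^ 2 * r i * c j / s := by
  have mono : ∀ i j {t u : ℝ}, t ≤ u → x i * t * y j ≤ x i * u * y j := fun i j _ _ h =>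
    mul_le_mul_of_nonneg_right (mul_le_mul_of_nonneg_left h (hx i).le) (hy j).le
  have hP : ∀ i j, 0 < x i * A i j * y j := fun i j =>
    mul_pos (mul_pos (hx i) (ha.trans_le (hA i j).1)) (hy j)
  have hsum_x : 0 < ∑ i, x i := sum_pos (fun i _ => hx i) ⟨i, mem_univ _⟩
  have hsum_y : 0 < ∑ j, y j := sum_pos (fun j _ => hy j) ⟨j, mem_univ _⟩
  have hrow_ge : a * x i * ∑ j, y j ≤ r i := by
    rw [← hrow i, mul_sum]
    exact sum_le_sum fun j _ => (mono i j (hA i j).1).trans_eq' (by ring)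
  have hcol_ge : a * y j * ∑ i, x i ≤ c j := by
    rw [← hcol j, mul_sum]
    exact sum_le_sum fun i _ => (mono i j (hA i j).1).trans_eq' (by ring)
  have hs_le : s ≤ b * (∑ i, x i) * ∑ j, y j :=
    calc s = ∑ j, ∑ i, x i * A i j * y j := by
          rw [← hs]
          exact sum_congr rfl fun j _ => (hcol j).symm
      _ ≤ ∑ j, ∑ i, x i * b * y j :=
          sum_le_sum fun j _ => sum_le_sum fun i _ => mono i j (hA i j).2
      _ = b * (∑ i, x i) * ∑ j, y j := by
          rw [sum_comm, mul_sum _ _ b, sum_mul_sum]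
          exact sum_congr rfl fun i _ => sum_congr rfl fun j _ => by ring
  have hs_pos : 0 < s :=
    hs ▸ sum_pos (fun j _ => hcol j ▸ sum_pos (fun i _ => hP i j) ⟨i, mem_univ _⟩) ⟨j, mem_univ _⟩
  rw [le_div_iff₀ hs_pos]
  calc x i * A i j * y j * s ≤ (x i * b * y j) * (b * (∑ i, x i) * ∑ j, y j) :=
        mul_le_mul (mono i j (hA i j).2) hs_le hs_pos.le
          ((hP i j).le.trans (mono i j (hA i j).2))
    _ = (b / a) ^ 2 * ((a * x i * ∑ j, y j) * (a * y j * ∑ i, x i)) := by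
        field_simp
    _ ≤ (b / a) ^ 2 * (r i * c j) :=
        mul_le_mul_of_nonneg_left (mul_le_mul hrow_ge hcol_ge
          (mul_pos (mul_pos ha (hy j)) hsum_x).le
          ((mul_pos (mul_pos ha (hx i)) hsum_y).le.trans hrow_ge)) (sq_nonneg _)
    _ = (b / a) ^ 2 * r i * c j := by ring

theorem scaled_l2_opNorm_le [DecidableEq κ] (ha : 0 < a)
    (hA : ∀ i j, a ≤ A i j ∧ A i j ≤ b) (hx : ∀ i, 0 < x i) (hy : ∀ j, 0 < y j)
    (hrow : ∀ i, ∑ j, x i * A i j * y j = r i) (hcol : ∀ j, ∑ i, x i * A i j * y j = c j)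
    (hs : ∑ j, c j = s) :
    ‖Matrix.of fun i j => x i * A i j * y j‖ ≤
      (b / a) ^ 2 * (√(∑ i, r i ^ 2) * √(∑ j, c j ^ 2)) / s := by
  have hP : ∀ i j, 0 ≤ x i * A i j * y j := fun i j =>
    mul_nonneg (mul_nonneg (hx i).le (ha.le.trans (hA i j).1)) (hy j).le
  have hs_nonneg : 0 ≤ s := hs ▸ sum_nonneg fun j _ => hcol j ▸ sum_nonneg fun i _ => hP i j
  rw [mul_div_right_comm]
  refine Matrix.l2_opNorm_le_of_abs_le_mul (by positivity) fun i j => ?_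
  rw [Matrix.of_apply, abs_of_nonneg (hP i j)]
  exact (scaled_entry_le ha hA hx hy hrow hcol hs i j).trans_eq (by ring)

end Scaling

theorem sqrt_sum_sq_le_sqrt_card_mul_iSup {ι : Type*} [Fintype ι] {f : ι → ℝ}
    (hf : ∀ i, 0 ≤ f i) : √(∑ i, f i ^ 2) ≤ √(Fintype.card ι) * ⨆ i, f i := by
  rw [← Real.sqrt_sq (Real.iSup_nonneg hf), ← Real.sqrt_mul (Nat.cast_nonneg _)]
  refine Real.sqrt_le_sqrt ?_
  calc ∑ i, f i ^ 2 ≤ ∑ _i : ι, (⨆ i, f i) ^ 2 :=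
        sum_le_sum fun i _ =>
          pow_le_pow_left₀ (hf i) (le_ciSup (Set.finite_range f).bddAbove i) 2
    _ = Fintype.card ι * (⨆ i, f i) ^ 2 := by rw [sum_const, card_univ, nsmul_eq_mul]

theorem opNorm_diff_of_scaled_matrices_bound_general
    (M N : ℕ)
    (A At : Fin M → Fin N → ℝ) (a b s : ℝ)
    (x xt : Fin M → ℝ) (y yt : Fin N → ℝ) (r : Fin M → ℝ) (c : Fin N → ℝ)
    (ha : 0 < a)
    (hA : ∀ i j, a ≤ A i j ∧ A i j ≤ b)
    (hAt : ∀ i j, a ≤ At i j ∧ At i j ≤ b)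
    (hr : ∀ i, 0 < r i) (hc : ∀ j, 0 < c j)
    (hs_c : ∑ j, c j = s)
    (hx : ∀ i, 0 < x i) (hy : ∀ j, 0 < y j)
    (hxt : ∀ i, 0 < xt i) (hyt : ∀ j, 0 < yt j)
    (hrow : ∀ i, ∑ j, x i * A i j * y j = r i)
    (hcol : ∀ j, ∑ i, x i * A i j * y j = c j)
    (hrowt : ∀ i, ∑ j, xt i * At i j * yt j = r i)
    (hcolt : ∀ j, ∑ i, xt i * At i j * yt j = c j) :
    ‖(Matrix.of fun i j => xt i * At i j * yt j) -
        (Matrix.of fun i j => x i * A i j * y j)‖ ≤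
      2 * (b / a) ^ 2 * (Real.sqrt (∑ i, r i ^ 2) * Real.sqrt (∑ j, c j ^ 2)) / s ∧
    2 * (b / a) ^ 2 * (Real.sqrt (∑ i, r i ^ 2) * Real.sqrt (∑ j, c j ^ 2)) / s ≤
      2 * (b / a) ^ 2 * (Real.sqrt M * (⨆ i, r i) * (Real.sqrt N * ⨆ j, c j)) / s := by
  have hs : 0 ≤ s := hs_c ▸ sum_nonneg fun j _ => (hc j).le
  refine ⟨?_, ?_⟩
  · have hsum := add_le_add (scaled_l2_opNorm_le ha hAt hxt hyt hrowt hcolt hs_c)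
      (scaled_l2_opNorm_le ha hA hx hy hrow hcol hs_c)
    exact (norm_sub_le _ _).trans (hsum.trans_eq (by ring))
  · have hr_le := sqrt_sum_sq_le_sqrt_card_mul_iSup fun i => (hr i).le
    have hc_le := sqrt_sum_sq_le_sqrt_card_mul_iSup fun j => (hc j).le
    rw [Fintype.card_fin] at hr_le hc_le
    gcongr
    exact (Real.sqrt_nonneg _).trans hr_le

theorem opNorm_diff_of_scaled_matrices_bound
    (M N : ℕ) (hM : 0 < M) (hN : 0 < N)
    (A At : Fin M → Fin N → ℝ) (a b s : ℝ)
    (x xt : Fin M → ℝ) (y yt : Fin N → ℝ) (r : Fin M → ℝ) (c : Fin N → ℝ)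
    (ha : 0 < a) (hab : a ≤ b)
    (hA : ∀ i j, a ≤ A i j ∧ A i j ≤ b)
    (hAt : ∀ i j, a ≤ At i j ∧ At i j ≤ b)
    (hr : ∀ i, 0 < r i) (hc : ∀ j, 0 < c j)
    (hs_r : ∑ i, r i = s) (hs_c : ∑ j, c j = s)
    (hx : ∀ i, 0 < x i) (hy : ∀ j, 0 < y j)
    (hxt : ∀ i, 0 < xt i) (hyt : ∀ j, 0 < yt j)
    (hrow : ∀ i, ∑ j, x i * A i j * y j = r i)
    (hcol : ∀ j, ∑ i, x i * A i j * y j = c j)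
    (hrowt : ∀ i, ∑ j, xt i * At i j * yt j = r i)
    (hcolt : ∀ j, ∑ i, xt i * At i j * yt j = c j) :
    ‖(Matrix.of fun i j => xt i * At i j * yt j) -
        (Matrix.of fun i j => x i * A i j * y j)‖ ≤
      2 * (b / a) ^ 2 * (Real.sqrt (∑ i, r i ^ 2) * Real.sqrt (∑ j, c j ^ 2)) / s ∧
    2 * (b / a) ^ 2 * (Real.sqrt (∑ i, r i ^ 2) * Real.sqrt (∑ j, c j ^ 2)) / s ≤
      2 * (b / a) ^ 2 * (Real.sqrt M * (⨆ i, r i) * (Real.sqrt N * ⨆ j, c j)) / s :=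
  opNorm_diff_of_scaled_matrices_bound_general M N A At a b s x xt y yt r c ha hA hAt hr hc hs_c hx
    hy hxt hyt hrow hcol hrowt hcolt
end

section
/- If positive vectors x, y scale a matrix A with entries in [a,b] (0 < a ≤ b) to row sums r and column sums c with ‖r‖₁ = ‖c‖₁ = s, then the scaled matrix P = D(x) A D(y) satisfies P_{i,j} ≤ (b/a)² · r_i c_j / s for all i, j. -/
/-!
Write `X = ∑ i, x i` and `Y = ∑ j, y j`. Since `a ≤ A ≤ b`, the row and column sums satisfy
`r i ≥ a x_i Y` and `c j ≥ a X y_j`, while the total mass satisfies `s ≤ b X Y`. Multiplying,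
`a² s x_i y_j ≤ b (a x_i Y)(a X y_j) ≤ b r_i c_j`, and `P_{i,j} ≤ b x_i y_j` gives the claim.
-/

open Finset

section Scaling

variable {ι κ : Type*} {A : ι → κ → ℝ} {x : ι → ℝ} {y : κ → ℝ} {a b : ℝ}

theorem mul_mul_sum_le_sum_scaled_row [Fintype κ] {i : ι} (hx : 0 ≤ x i) (hy : ∀ j, 0 ≤ y j)
    (hA : ∀ j, a ≤ A i j) : a * x i * ∑ j, y j ≤ ∑ j, x i * A i j * y j := by
  rw [mul_sum]
  refine sum_le_sum fun j _ => mul_le_mul_of_nonneg_right ?_ (hy j)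
  rw [mul_comm a]
  exact mul_le_mul_of_nonneg_left (hA j) hx

theorem mul_sum_mul_le_sum_scaled_col [Fintype ι] {j : κ} (hx : ∀ i, 0 ≤ x i) (hy : 0 ≤ y j)
    (hA : ∀ i, a ≤ A i j) : a * (∑ i, x i) * y j ≤ ∑ i, x i * A i j * y j := by
  rw [mul_sum, sum_mul]
  refine sum_le_sum fun i _ => mul_le_mul_of_nonneg_right ?_ hy
  rw [mul_comm a]
  exact mul_le_mul_of_nonneg_left (hA i) (hx i)

theorem sum_sum_scaled_le_mul_sum_mul_sum [Fintype ι] [Fintype κ] (hx : ∀ i, 0 ≤ x i)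
    (hy : ∀ j, 0 ≤ y j) (hA : ∀ i j, A i j ≤ b) :
    ∑ i, ∑ j, x i * A i j * y j ≤ b * (∑ i, x i) * ∑ j, y j := by
  rw [mul_sum univ x b, sum_mul_sum]
  refine sum_le_sum fun i _ => sum_le_sum fun j _ => mul_le_mul_of_nonneg_right ?_ (hy j)
  rw [mul_comm b]
  exact mul_le_mul_of_nonneg_left (hA i j) (hx i)

theorem mul_le_div_of_scaled_row_col_sums [Fintype ι] [Fintype κ] {r : ι → ℝ} {c : κ → ℝ}
    {s : ℝ} (ha : 0 < a) (hlo : ∀ i j, a ≤ A i j) (hhi : ∀ i j, A i j ≤ b) (hx : ∀ i, 0 < x i)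
    (hy : ∀ j, 0 < y j) (hr : ∀ i, 0 < r i) (hs : ∑ i, r i = s)
    (hrow : ∀ i, ∑ j, x i * A i j * y j = r i)
    (hcol : ∀ j, ∑ i, x i * A i j * y j = c j) (i : ι) (j : κ) :
    x i * y j ≤ b / a ^ 2 * (r i * c j) / s := by
  set X := ∑ i, x i
  set Y := ∑ j, y j
  have hb : 0 ≤ b := ha.le.trans ((hlo i j).trans (hhi i j))
  have hs_pos : 0 < s := hs ▸ sum_pos (fun i _ => hr i) ⟨i, mem_univ i⟩
  have hri : a * x i * Y ≤ r i :=
    hrow i ▸ mul_mul_sum_le_sum_scaled_row (hx i).le (fun j => (hy j).le) (hlo i)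
  have hcj : a * X * y j ≤ c j :=
    hcol j ▸ mul_sum_mul_le_sum_scaled_col (fun i => (hx i).le) (hy j).le (hlo · j)
  have hsXY : s ≤ b * X * Y := by
    rw [← hs, ← sum_congr rfl fun i _ => hrow i]
    exact sum_sum_scaled_le_mul_sum_mul_sum (fun i => (hx i).le) (fun j => (hy j).le) hhi
  have hX : 0 ≤ X := sum_nonneg fun i _ => (hx i).le
  have key : a ^ 2 * (x i * y j) * s ≤ b * (r i * c j) :=
    calc a ^ 2 * (x i * y j) * s ≤ a ^ 2 * (x i * y j) * (b * X * Y) := by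
          refine mul_le_mul_of_nonneg_left hsXY (mul_nonneg (sq_nonneg a) ?_)
          exact mul_nonneg (hx i).le (hy j).le
      _ = b * ((a * x i * Y) * (a * X * y j)) := by ring
      _ ≤ b * (r i * c j) := by
          refine mul_le_mul_of_nonneg_left (mul_le_mul hri hcj ?_ (hr i).le) hb
          exact mul_nonneg (mul_nonneg ha.le hX) (hy j).le
  rw [div_mul_eq_mul_div, div_div, le_div_iff₀ (by positivity)]
  linarith

end Scaling

theorem scaled_matrix_entry_bound_general
    (M N : ℕ) (A : Fin M → Fin N → ℝ) (a b s : ℝ)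
    (x : Fin M → ℝ) (y : Fin N → ℝ) (r : Fin M → ℝ) (c : Fin N → ℝ)
    (ha : 0 < a)
    (hA : ∀ i j, a ≤ A i j ∧ A i j ≤ b)
    (hr : ∀ i, 0 < r i)
    (hs_r : ∑ i, r i = s)
    (hx : ∀ i, 0 < x i) (hy : ∀ j, 0 < y j)
    (hrow : ∀ i, ∑ j, x i * A i j * y j = r i)
    (hcol : ∀ j, ∑ i, x i * A i j * y j = c j) :
    ∀ i j, x i * A i j * y j ≤ (b / a) ^ 2 * (r i * c j) / s := by
  intro i j
  have hb : 0 ≤ b := ha.le.trans ((hA i j).1.trans (hA i j).2)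
  calc x i * A i j * y j ≤ x i * b * y j := by
        gcongr
        exacts [(hy j).le, (hx i).le, (hA i j).2]
    _ = b * (x i * y j) := by ring
    _ ≤ b * (b / a ^ 2 * (r i * c j) / s) := by
        gcongr
        exact mul_le_div_of_scaled_row_col_sums ha (fun i j => (hA i j).1) (fun i j => (hA i j).2)
          hx hy hr hs_r hrow hcol i j
    _ = (b / a) ^ 2 * (r i * c j) / s := by ring

theorem scaled_matrix_entry_bound
    (M N : ℕ) (A : Fin M → Fin N → ℝ) (a b s : ℝ)
    (x : Fin M → ℝ) (y : Fin N → ℝ) (r : Fin M → ℝ) (c : Fin N → ℝ)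
    (ha : 0 < a) (hab : a ≤ b)
    (hA : ∀ i j, a ≤ A i j ∧ A i j ≤ b)
    (hr : ∀ i, 0 < r i) (hc : ∀ j, 0 < c j)
    (hs_r : ∑ i, r i = s) (hs_c : ∑ j, c j = s)
    (hx : ∀ i, 0 < x i) (hy : ∀ j, 0 < y j)
    (hrow : ∀ i, ∑ j, x i * A i j * y j = r i)
    (hcol : ∀ j, ∑ i, x i * A i j * y j = c j) :
    ∀ i j, x i * A i j * y j ≤ (b / a) ^ 2 * (r i * c j) / s :=
  scaled_matrix_entry_bound_general M N A a b s x y r c ha hA hr hs_r hx hy hrow hcol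
end

section
/- Suppose a positive matrix Ã with entries in [a,b], 0 < a ≤ b, admits scaling factors to row sums r and column sums c (positive, ‖r‖₁ = ‖c‖₁ = s). If in addition approximate scaling by a reference pair (x,y), satisfying C₁ ≥ √a/b and C₂ ≥ √a/b where C₁ = min_i x_i/(r_i/√s), C₂ = min_j y_j/(c_j/√s), holds with error ε ∈ (0, 1/2], then there is a scaling pair (x̃, ỹ) with |x̃_i − x_i|/x_i ≤ ε(2 + 4(s/(M min_i r_i))(b/a)^{7/2}) and |ỹ_j − y_j|/y_j ≤ ε(2 + 4(s/(N min_j c_j))(b/a)^{7/2}) for all i, j. -/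
/-!
A scaling of `A` exists because the potential
`Φ u = ∑ j, c j * log (∑ i, u i * A i j) - ∑ i, r i * log (u i)` is invariant under
`u ↦ t • u` (as `∑ r = ∑ c`) and blows up at the boundary of the simplex, so it has a minimiser
`u` in the open orthant; its vanishing partial derivatives say exactly that `u` and
`y j = c j / ∑ i, u i * A i j` form a scaling.

For stability, compare an exact scaling `(x̃, ỹ)` with the approximate one through the ratios
`p = x̃ / x` and `q = ỹ / y`. Row `i` says that `p i` times a weighted average of `q` lies within
a factor `1 ± ε` of `1`. The weights `A i j * y j` dominate `a / b` times the common weights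
`y j` (a Doeblin condition), so these averages are less spread out than `q`, and the spread
`P = max p / min p` satisfies `P * (1 + ε - 2 ε β) ≤ 1 + ε` with `β = b / a`; when
`4 ε β > 1 + ε` the cruder `P ≤ 3 β²` is used instead. Either way
`P ≤ ((1 - ε) * (1 + T))²` with `T = ε * (2 + 4 β³)`, and dividing `x̃` by the geometric mean
of `min p` and `max p` (and multiplying `ỹ` by it) brings every ratio within `T` of `1`.
-/

open Finset

section Scaling

variable {ι κ : Type*} [Fintype ι] [Fintype κ]

def IsScaling (A : ι → κ → ℝ) (r : ι → ℝ) (c : κ → ℝ) (x : ι → ℝ) (y : κ → ℝ) : Prop :=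
  (∀ i, ∑ j, x i * A i j * y j = r i) ∧ ∀ j, ∑ i, x i * A i j * y j = c j

def IsApproxScaling (ε : ℝ) (A : ι → κ → ℝ) (r : ι → ℝ) (c : κ → ℝ) (x : ι → ℝ)
    (y : κ → ℝ) : Prop :=
  (∀ i, |(1 / r i) * ∑ j, x i * A i j * y j - 1| ≤ ε) ∧
    ∀ j, |(1 / c j) * ∑ i, x i * A i j * y j - 1| ≤ ε

variable {A : ι → κ → ℝ} {r : ι → ℝ} {c : κ → ℝ} {x : ι → ℝ} {y : κ → ℝ} {ε : ℝ}

lemma IsScaling.transpose (h : IsScaling A r c x y) : IsScaling (fun j i => A i j) c r y x :=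
  ⟨fun j => (sum_congr rfl fun i _ => by ring).trans (h.2 j),
    fun i => (sum_congr rfl fun j _ => by ring).trans (h.1 i)⟩

lemma IsApproxScaling.transpose (h : IsApproxScaling ε A r c x y) :
    IsApproxScaling ε (fun j i => A i j) c r y x :=
  ⟨fun j => by simpa only [mul_comm, mul_left_comm] using h.2 j,
    fun i => by simpa only [mul_comm, mul_left_comm] using h.1 i⟩

lemma IsScaling.div_mul (h : IsScaling A r c x y) {t : ℝ} (ht : t ≠ 0) :
    IsScaling A r c (fun i => x i / t) (fun j => t * y j) := by
  refine ⟨fun i => (sum_congr rfl fun j _ => ?_).trans (h.1 i),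
    fun j => (sum_congr rfl fun i _ => ?_).trans (h.2 j)⟩ <;> field_simp

end Scaling

section Potential

variable {ι κ : Type*} [Fintype ι] [Fintype κ]

noncomputable def scalingPotential (A : ι → κ → ℝ) (r : ι → ℝ) (c : κ → ℝ) (u : ι → ℝ) : ℝ :=
  ∑ j, c j * Real.log (∑ i, u i * A i j) - ∑ i, r i * Real.log (u i)

variable {A : ι → κ → ℝ} {r : ι → ℝ} {c : κ → ℝ}

lemma scalingPotential_smul [Nonempty ι] (hA : ∀ i j, 0 < A i j) (hrc : ∑ i, r i = ∑ j, c j)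
    {u : ι → ℝ} (hu : ∀ i, 0 < u i) {t : ℝ} (ht : 0 < t) :
    scalingPotential A r c (t • u) = scalingPotential A r c u := by
  have hcol : ∀ j, ∑ i, u i * A i j ≠ 0 := fun j =>
    (sum_pos (fun i _ => mul_pos (hu i) (hA i j)) univ_nonempty).ne'
  simp only [scalingPotential, Pi.smul_apply, smul_eq_mul, mul_assoc, ← mul_sum]
  simp only [Real.log_mul ht.ne' (hcol _), Real.log_mul ht.ne' (hu _).ne', mul_add,
    sum_add_distrib, ← sum_mul, hrc]
  ring

lemma scalingPotential_ge {a : ℝ} (ha : 0 < a) (hA : ∀ i j, a ≤ A i j) (hr : ∀ i, 0 ≤ r i)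
    (hc : ∀ j, 0 ≤ c j) {u : ι → ℝ} (hu : ∀ i, 0 < u i) (hsum : ∑ i, u i = 1) (i : ι) :
    (∑ j, c j) * Real.log a - r i * Real.log (u i) ≤ scalingPotential A r c u := by
  have hcol : ∀ j, a ≤ ∑ i, u i * A i j := fun j =>
    calc a = ∑ i, u i * a := by rw [← sum_mul, hsum, one_mul]
      _ ≤ ∑ i, u i * A i j := sum_le_sum fun i _ => mul_le_mul_of_nonneg_left (hA i j) (hu i).le
  have hlog : (∑ j, c j) * Real.log a ≤ ∑ j, c j * Real.log (∑ i, u i * A i j) := by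
    rw [sum_mul]
    exact sum_le_sum fun j _ => mul_le_mul_of_nonneg_left (Real.log_le_log ha (hcol j)) (hc j)
  have hle : ∀ k, u k ≤ 1 := fun k => hsum ▸ single_le_sum (fun k _ => (hu k).le) (mem_univ k)
  have hneg : ∑ k, r k * Real.log (u k) ≤ r i * Real.log (u i) := by
    simpa using sum_le_sum_of_subset_of_nonpos' (subset_univ {i}) fun k _ _ =>
      mul_nonpos_of_nonneg_of_nonpos (hr k) (Real.log_nonpos (hu k).le (hle k))
  unfold scalingPotential
  linarith

lemma continuousOn_scalingPotential {s : Set (ι → ℝ)} (hs : ∀ u ∈ s, ∀ i, 0 < u i)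
    (hcol : ∀ u ∈ s, ∀ j, ∑ i, u i * A i j ≠ 0) : ContinuousOn (scalingPotential A r c) s := by
  unfold scalingPotential
  fun_prop (disch := first | exact fun u hu => hcol u hu _ | exact fun u hu => (hs u hu _).ne')

theorem exists_isMinOn_scalingPotential_simplex [Nonempty ι] (hA : ∀ i j, 0 < A i j)
    (hr : ∀ i, 0 < r i) (hc : ∀ j, 0 < c j) :
    ∃ u, (∀ i, 0 < u i) ∧
      IsMinOn (scalingPotential A r c) {w | (∀ i, 0 < w i) ∧ ∑ i, w i = 1} u := by
  obtain ⟨a, ha, hAa⟩ : ∃ a, 0 < a ∧ ∀ i j, a ≤ A i j := by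
    cases isEmpty_or_nonempty κ
    · exact ⟨1, one_pos, fun _ j => isEmptyElim j⟩
    obtain ⟨⟨i₀, j₀⟩, h⟩ := Finite.exists_min fun p : ι × κ => A p.1 p.2
    exact ⟨A i₀ j₀, hA i₀ j₀, fun i j => h (i, j)⟩
  have hn : (0 : ℝ) < Fintype.card ι := by exact_mod_cast Fintype.card_pos
  set u₀ : ι → ℝ := fun _ => (Fintype.card ι : ℝ)⁻¹
  set L := (∑ j, c j) * Real.log a - scalingPotential A r c u₀
  -- below `lo i` in coordinate `i`, a point of the simplex has a larger potential than `u₀`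
  set lo : ι → ℝ := fun i => min (Fintype.card ι : ℝ)⁻¹ (Real.exp (L / r i))
  set K := stdSimplex ℝ ι ∩ Set.Ici lo
  have hK : ∀ u ∈ K, ∀ i, 0 < u i := fun u hu i =>
    (lt_min (inv_pos.2 hn) (Real.exp_pos _)).trans_le (hu.2 i)
  have hu₀ : u₀ ∈ K := by
    refine ⟨⟨fun _ => (inv_pos.2 hn).le, ?_⟩, fun _ => min_le_left _ _⟩
    simp [u₀, hn.ne']
  obtain ⟨u, huK, hmin⟩ :=
    ((isCompact_stdSimplex ℝ ι).inter_right isClosed_Ici).exists_isMinOn ⟨u₀, hu₀⟩ <|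
      continuousOn_scalingPotential (r := r) (c := c) hK fun u hu j =>
        (sum_pos (fun i _ => mul_pos (hK u hu i) (hA i j)) univ_nonempty).ne'
  refine ⟨u, hK u huK, fun w ⟨hw, hw1⟩ => ?_⟩
  by_cases hwK : ∀ i, lo i ≤ w i
  · exact hmin ⟨⟨fun i => (hw i).le, hw1⟩, hwK⟩
  obtain ⟨i, hi⟩ : ∃ i, w i < lo i := by simpa using hwK
  have hlog : r i * Real.log (w i) < L :=
    (lt_div_iff₀' (hr i)).1 <| (Real.log_lt_iff_lt_exp (hw i)).2 (hi.trans_le (min_le_right _ _))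
  calc scalingPotential A r c u ≤ scalingPotential A r c u₀ := hmin hu₀
    _ ≤ (∑ j, c j) * Real.log a - r i * Real.log (w i) := by linarith
    _ ≤ scalingPotential A r c w :=
      scalingPotential_ge ha hAa (fun i => (hr i).le) (fun j => (hc j).le) hw hw1 i

theorem exists_isMinOn_scalingPotential [Nonempty ι] (hA : ∀ i j, 0 < A i j)
    (hr : ∀ i, 0 < r i) (hc : ∀ j, 0 < c j) (hrc : ∑ i, r i = ∑ j, c j) :
    ∃ u, (∀ i, 0 < u i) ∧ IsMinOn (scalingPotential A r c) {v | ∀ i, 0 < v i} u := by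
  obtain ⟨u, hu, hmin⟩ := exists_isMinOn_scalingPotential_simplex hA hr hc
  refine ⟨u, hu, fun v (hv : ∀ i, 0 < v i) => ?_⟩
  have hv0 : 0 < ∑ i, v i := sum_pos (fun i _ => hv i) univ_nonempty
  show scalingPotential A r c u ≤ scalingPotential A r c v
  rw [← scalingPotential_smul hA hrc hv (inv_pos.2 hv0)]
  exact hmin ⟨fun i => mul_pos (inv_pos.2 hv0) (hv i), by simp [← mul_sum, hv0.ne']⟩

lemma hasDerivAt_log_add_mul {p : ℝ} (hp : p ≠ 0) (q : ℝ) :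
    HasDerivAt (fun t => Real.log (p + t * q)) (q / p) 0 := by
  simpa using (((hasDerivAt_id (0 : ℝ)).mul_const q).const_add p).log (by simpa using hp)

lemma hasDerivAt_scalingPotential_add_single [DecidableEq ι] {u : ι → ℝ} (hu : ∀ i, 0 < u i)
    (hcol : ∀ j, ∑ k, u k * A k j ≠ 0) (i : ι) :
    HasDerivAt (fun t : ℝ => scalingPotential A r c (u + t • Pi.single i 1))
      (∑ j, c j * (A i j / ∑ k, u k * A k j) - r i / u i) 0 := by
  have hcol_add : ∀ (t : ℝ) j,
      ∑ k, (u + t • Pi.single i 1 : ι → ℝ) k * A k j = ∑ k, u k * A k j + t * A i j := by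
    simp [add_mul, sum_add_distrib, Pi.single_apply]
  have hsingle : ∑ k, r k * ((Pi.single i 1 : ι → ℝ) k / u k) = r i / u i := by
    simp [Pi.single_apply, div_eq_mul_inv]
  rw [← hsingle]
  simp only [scalingPotential, hcol_add]
  refine (HasDerivAt.fun_sum fun j _ => (hasDerivAt_log_add_mul (hcol j) _).const_mul (c j)).sub
    (HasDerivAt.fun_sum fun k _ => ?_)
  simpa using (hasDerivAt_log_add_mul (hu k).ne' ((Pi.single i 1 : ι → ℝ) k)).const_mul (r k)

theorem exists_isScaling [Nonempty ι] (hA : ∀ i j, 0 < A i j) (hr : ∀ i, 0 < r i)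
    (hc : ∀ j, 0 < c j) (hrc : ∑ i, r i = ∑ j, c j) :
    ∃ x y, (∀ i, 0 < x i) ∧ (∀ j, 0 < y j) ∧ IsScaling A r c x y := by
  classical
  obtain ⟨u, hu, hmin⟩ := exists_isMinOn_scalingPotential hA hr hc hrc
  have hcol : ∀ j, 0 < ∑ i, u i * A i j := fun j =>
    sum_pos (fun i _ => mul_pos (hu i) (hA i j)) univ_nonempty
  have hcrit : ∀ i, ∑ j, c j * (A i j / ∑ k, u k * A k j) = r i / u i := fun i => by
    have hloc : IsLocalMin (fun t : ℝ => scalingPotential A r c (u + t • Pi.single i 1)) 0 := by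
      filter_upwards [Metric.ball_mem_nhds 0 (hu i)] with t ht
      rw [Real.ball_eq_Ioo, zero_sub, zero_add] at ht
      simp only [zero_smul, add_zero]
      refine hmin fun k => ?_
      rcases eq_or_ne k i with rfl | hk
      · simp only [Pi.add_apply, Pi.smul_apply, Pi.single_eq_same, smul_eq_mul, mul_one]
        linarith [ht.1]
      · simpa [hk] using hu k
    exact sub_eq_zero.1 <| hloc.hasDerivAt_eq_zero <|
      hasDerivAt_scalingPotential_add_single hu (fun j => (hcol j).ne') i
  refine ⟨u, fun j => c j / ∑ k, u k * A k j, hu, fun j => div_pos (hc j) (hcol j),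
    fun i => ?_, fun j => ?_⟩
  · calc ∑ j, u i * A i j * (c j / ∑ k, u k * A k j)
        = u i * ∑ j, c j * (A i j / ∑ k, u k * A k j) := by
          rw [mul_sum]; exact sum_congr rfl fun j _ => by ring
      _ = r i := by rw [hcrit i, mul_div_cancel₀ _ (hu i).ne']
  · rw [← sum_mul]
    exact mul_div_cancel₀ _ (hcol j).ne'

end Potential

section WeightedAverage

variable {κ : Type*} [Fintype κ] {w y q : κ → ℝ} {a b m M : ℝ}

/-- With `y` normalised, this says that the `w`-average of `q` is at least the mixture
`(a / b) * (y-average of q) + (1 - a / b) * m`. -/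
lemma weighted_average_ge_mix (ha : 0 ≤ a) (hy : ∀ j, 0 ≤ y j)
    (hw : ∀ j, a * y j ≤ w j ∧ w j ≤ b * y j) (hm : ∀ j, m ≤ q j) :
    (∑ j, w j) * (a * ∑ j, y j * q j + (b - a) * m * ∑ j, y j) ≤
      b * (∑ j, y j) * ∑ j, w j * q j := by
  set W := ∑ j, w j
  set Y := ∑ j, y j
  have hWY : W ≤ b * Y := by
    rw [mul_sum]; exact sum_le_sum fun j _ => (hw j).2
  have hW : 0 ≤ W := sum_nonneg fun j _ => (mul_nonneg ha (hy j)).trans (hw j).1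
  have hterm : ∀ j, (q j - m) * (a * W * y j - b * Y * w j) ≤ 0 := fun j =>
    mul_nonpos_of_nonneg_of_nonpos (sub_nonneg.2 (hm j)) <| sub_nonpos.2 <|
      calc a * W * y j ≤ a * (b * Y) * y j := by gcongr; exact hy j
        _ = b * Y * (a * y j) := by ring
        _ ≤ b * Y * w j := mul_le_mul_of_nonneg_left (hw j).1 (hW.trans hWY)
  have hexpand : ∑ j, (q j - m) * (a * W * y j - b * Y * w j) =
      a * W * ∑ j, y j * q j - a * W * m * Y - b * Y * ∑ j, w j * q j + b * Y * m * W := by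
    simp only [fun j => show (q j - m) * (a * W * y j - b * Y * w j) =
      a * W * (y j * q j) - a * W * m * y j - b * Y * (w j * q j) + b * Y * m * w j by ring,
      sum_add_distrib, sum_sub_distrib, ← mul_sum, W, Y]
  linarith [sum_nonpos fun j (_ : j ∈ univ) => hterm j]

lemma weighted_average_le_mix (ha : 0 ≤ a) (hy : ∀ j, 0 ≤ y j)
    (hw : ∀ j, a * y j ≤ w j ∧ w j ≤ b * y j) (hM : ∀ j, q j ≤ M) :
    b * (∑ j, y j) * ∑ j, w j * q j ≤
      (∑ j, w j) * (a * ∑ j, y j * q j + (b - a) * M * ∑ j, y j) := by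
  have := weighted_average_ge_mix (q := -q) (m := -M) ha hy hw fun j => neg_le_neg (hM j)
  simp only [Pi.neg_apply, mul_neg, sum_neg_distrib] at this
  linarith

lemma mix_nonneg (ha : 0 ≤ a) (hab : a ≤ b) (hy : ∀ j, 0 ≤ y j) (hq : ∀ j, 0 ≤ q j)
    (hm : 0 ≤ m) : 0 ≤ a * ∑ j, y j * q j + (b - a) * m * ∑ j, y j := by
  have := sum_nonneg fun j (_ : j ∈ univ) => mul_nonneg (hy j) (hq j)
  have := sum_nonneg fun j (_ : j ∈ univ) => hy j
  have := mul_nonneg (sub_nonneg.2 hab) hm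
  positivity

end WeightedAverage

section ApproxRow

variable {κ : Type*} [Fintype κ] [Nonempty κ] {w y q : κ → ℝ} {a b ε ρ m M : ℝ}

lemma one_sub_mul_mix_le (ha : 0 < a) (hab : a ≤ b) (hy : ∀ j, 0 < y j)
    (hq : ∀ j, 0 < q j) (hw : ∀ j, a * y j ≤ w j ∧ w j ≤ b * y j)
    (h : (1 - ε) * (ρ * ∑ j, w j * q j) ≤ ∑ j, w j) (hm0 : 0 ≤ m) (hm : ∀ j, m ≤ q j) :
    (1 - ε) * ρ * (a * ∑ j, y j * q j + (b - a) * m * ∑ j, y j) ≤ b * ∑ j, y j := by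
  have hwq : 0 < ∑ j, w j * q j :=
    sum_pos (fun j _ => mul_pos ((mul_pos ha (hy j)).trans_le (hw j).1) (hq j)) univ_nonempty
  have hD := mix_nonneg ha.le hab (fun j => (hy j).le) (fun j => (hq j).le) hm0
  have := weighted_average_ge_mix ha.le (fun j => (hy j).le) hw hm
  refine le_of_mul_le_mul_right ?_ hwq
  nlinarith [mul_le_mul_of_nonneg_right h hD]

lemma le_one_add_mul_mix (ha : 0 < a) (hab : a ≤ b) (hy : ∀ j, 0 < y j)
    (hq : ∀ j, 0 < q j) (hw : ∀ j, a * y j ≤ w j ∧ w j ≤ b * y j)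
    (h : ∑ j, w j ≤ (1 + ε) * (ρ * ∑ j, w j * q j)) (hM : ∀ j, q j ≤ M) :
    b * ∑ j, y j ≤ (1 + ε) * ρ * (a * ∑ j, y j * q j + (b - a) * M * ∑ j, y j) := by
  have hwq : 0 < ∑ j, w j * q j :=
    sum_pos (fun j _ => mul_pos ((mul_pos ha (hy j)).trans_le (hw j).1) (hq j)) univ_nonempty
  have hD := mix_nonneg ha.le hab (fun j => (hy j).le) (fun j => (hq j).le)
    ((hq (Classical.arbitrary κ)).le.trans (hM _))
  have := weighted_average_le_mix ha.le (fun j => (hy j).le) hw hM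
  refine le_of_mul_le_mul_right ?_ hwq
  nlinarith [mul_le_mul_of_nonneg_right h hD]

lemma one_sub_mul_mul_le_one (hw : ∀ j, 0 < w j) (hε : ε ≤ 1) (hρ : 0 ≤ ρ)
    (h : (1 - ε) * (ρ * ∑ j, w j * q j) ≤ ∑ j, w j) (hm : ∀ j, m ≤ q j) :
    (1 - ε) * m * ρ ≤ 1 := by
  have hw₀ : 0 < ∑ j, w j := sum_pos (fun j _ => hw j) univ_nonempty
  have hmq : m * ∑ j, w j ≤ ∑ j, w j * q j := by
    rw [mul_sum]
    exact sum_le_sum fun j _ => by rw [mul_comm]; exact mul_le_mul_of_nonneg_left (hm j) (hw j).le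
  refine le_of_mul_le_mul_right ?_ hw₀
  nlinarith [mul_le_mul_of_nonneg_left hmq (mul_nonneg (sub_nonneg.2 hε) hρ)]

lemma one_le_one_add_mul_mul (hw : ∀ j, 0 < w j) (hε : 0 ≤ ε) (hρ : 0 ≤ ρ)
    (h : ∑ j, w j ≤ (1 + ε) * (ρ * ∑ j, w j * q j)) (hM : ∀ j, q j ≤ M) :
    1 ≤ (1 + ε) * M * ρ := by
  have hw₀ : 0 < ∑ j, w j := sum_pos (fun j _ => hw j) univ_nonempty
  have hMq : ∑ j, w j * q j ≤ M * ∑ j, w j := by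
    rw [mul_sum]
    exact sum_le_sum fun j _ => by rw [mul_comm M]; exact mul_le_mul_of_nonneg_left (hM j) (hw j).le
  refine le_of_mul_le_mul_right ?_ hw₀
  nlinarith [mul_le_mul_of_nonneg_left hMq (mul_nonneg (by linarith : 0 ≤ 1 + ε) hρ)]

end ApproxRow

lemma mul_bounds_of_entry_bounds {ι κ : Type*} {A : ι → κ → ℝ} {y : κ → ℝ} {a b : ℝ}
    (hA : ∀ i j, a ≤ A i j ∧ A i j ≤ b) (hy : ∀ j, 0 < y j) (i : ι) (j : κ) :
    a * y j ≤ A i j * y j ∧ A i j * y j ≤ b * y j :=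
  ⟨mul_le_mul_of_nonneg_right (hA i j).1 (hy j).le,
    mul_le_mul_of_nonneg_right (hA i j).2 (hy j).le⟩

section ApproxRatio

variable {ι κ : Type*} [Fintype κ] [Nonempty κ] {A : ι → κ → ℝ} {y q : κ → ℝ} {p : ι → ℝ}
  {a b ε m M : ℝ}

lemma approx_ratio_contraction (ha : 0 < a) (hab : a ≤ b) (hA : ∀ i j, a ≤ A i j ∧ A i j ≤ b)
    (hy : ∀ j, 0 < y j) (hq : ∀ j, 0 < q j) (hp : ∀ i, 0 ≤ p i) (hε : 0 ≤ ε)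
    (hpq : ∀ i, (1 - ε) * (p i * ∑ j, A i j * y j * q j) ≤ ∑ j, A i j * y j ∧
      ∑ j, A i j * y j ≤ (1 + ε) * (p i * ∑ j, A i j * y j * q j))
    (hm0 : 0 < m) (hm : ∀ j, m ≤ q j) (hM : ∀ j, q j ≤ M) (i i' : ι) :
    (1 - ε) * b * m * p i ≤ (1 + ε) * (a * m + (b - a) * M) * p i' := by
  have h₁ := one_sub_mul_mix_le ha hab hy hq (mul_bounds_of_entry_bounds hA hy i) (hpq i).1
    hm0.le hm
  have h₂ := le_one_add_mul_mix ha hab hy hq (mul_bounds_of_entry_bounds hA hy i') (hpq i').2 hM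
  set Y := ∑ j, y j
  set Z := ∑ j, y j * q j
  have hY : 0 < Y := sum_pos (fun j _ => hy j) univ_nonempty
  have hmZ : m * Y ≤ Z := by
    rw [mul_sum]; exact sum_le_sum fun j _ => by nlinarith [hm j, hy j]
  have hmM : m ≤ M := (hm (Classical.arbitrary κ)).trans (hM _)
  -- the two mixtures differ by `a (b - a) (M - m) (Z - m Y) ≥ 0`
  have hmed : b * m * (a * Z + (b - a) * M * Y) ≤
      (a * m + (b - a) * M) * (a * Z + (b - a) * m * Y) := by
    nlinarith [mul_nonneg (mul_nonneg (mul_nonneg ha.le (sub_nonneg.2 hab)) (sub_nonneg.2 hmM))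
      (sub_nonneg.2 hmZ)]
  have hD : 0 < a * Z + (b - a) * m * Y := by
    nlinarith [mul_nonneg (mul_nonneg (sub_nonneg.2 hab) hm0.le) hY.le,
      mul_pos ha (mul_pos hm0 hY)]
  refine le_of_mul_le_mul_right ?_ hD
  calc (1 - ε) * b * m * p i * (a * Z + (b - a) * m * Y)
      = b * m * ((1 - ε) * p i * (a * Z + (b - a) * m * Y)) := by ring
    _ ≤ b * m * ((1 + ε) * p i' * (a * Z + (b - a) * M * Y)) :=
      mul_le_mul_of_nonneg_left (h₁.trans h₂) (by nlinarith)
    _ = (1 + ε) * p i' * (b * m * (a * Z + (b - a) * M * Y)) := by ring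
    _ ≤ (1 + ε) * p i' * ((a * m + (b - a) * M) * (a * Z + (b - a) * m * Y)) :=
      mul_le_mul_of_nonneg_left hmed (mul_nonneg (by linarith) (hp i'))
    _ = (1 + ε) * (a * m + (b - a) * M) * p i' * (a * Z + (b - a) * m * Y) := by ring

lemma approx_ratio_crude (ha : 0 < a) (hab : a ≤ b) (hA : ∀ i j, a ≤ A i j ∧ A i j ≤ b)
    (hy : ∀ j, 0 < y j) (hq : ∀ j, 0 < q j) (hp : ∀ i, 0 ≤ p i) (hε : 0 ≤ ε)
    (hpq : ∀ i, (1 - ε) * (p i * ∑ j, A i j * y j * q j) ≤ ∑ j, A i j * y j ∧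
      ∑ j, A i j * y j ≤ (1 + ε) * (p i * ∑ j, A i j * y j * q j)) (i i' : ι) :
    (1 - ε) * a ^ 2 * p i ≤ (1 + ε) * b ^ 2 * p i' := by
  have h₁ := one_sub_mul_mix_le ha hab hy hq (mul_bounds_of_entry_bounds hA hy i) (hpq i).1
    le_rfl fun j => (hq j).le
  simp only [mul_zero, zero_mul, add_zero] at h₁
  set Y := ∑ j, y j
  set Z := ∑ j, y j * q j
  have hY : 0 < Y := sum_pos (fun j _ => hy j) univ_nonempty
  have hZ : 0 < Z := sum_pos (fun j _ => mul_pos (hy j) (hq j)) univ_nonempty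
  have hAY : a * Y ≤ ∑ j, A i' j * y j := by
    rw [mul_sum]; exact sum_le_sum fun j _ => (mul_bounds_of_entry_bounds hA hy i' j).1
  have hAZ : ∑ j, A i' j * y j * q j ≤ b * Z := by
    rw [mul_sum]
    refine sum_le_sum fun j _ => ?_
    rw [← mul_assoc]
    exact mul_le_mul_of_nonneg_right (mul_bounds_of_entry_bounds hA hy i' j).2 (hq j).le
  have h₂ : a * Y ≤ (1 + ε) * p i' * (b * Z) :=
    calc a * Y ≤ (1 + ε) * (p i' * ∑ j, A i' j * y j * q j) := hAY.trans (hpq i').2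
      _ ≤ (1 + ε) * p i' * (b * Z) := by
          rw [← mul_assoc]
          exact mul_le_mul_of_nonneg_left hAZ (mul_nonneg (by linarith) (hp i'))
  refine le_of_mul_le_mul_right ?_ (mul_pos hY hZ)
  nlinarith [mul_le_mul_of_nonneg_right h₁ (mul_pos ha hY).le,
    mul_le_mul_of_nonneg_right h₂ (mul_pos (ha.trans_le hab) hY).le]

end ApproxRatio

lemma le_and_le_of_abs_one_div_mul_sub_one_le_s19 {r S ε : ℝ} (hr : 0 < r)
    (h : |(1 / r) * S - 1| ≤ ε) : (1 - ε) * r ≤ S ∧ S ≤ (1 + ε) * r := by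
  rw [abs_le, one_div_mul_eq_div, le_sub_iff_add_le, sub_le_iff_le_add, le_div_iff₀ hr,
    div_le_iff₀ hr] at h
  constructor <;> linarith [h.1, h.2]

lemma approx_ratio_of_rows {ι κ : Type*} [Fintype κ] {A : ι → κ → ℝ} {r x xt : ι → ℝ}
    {y yt : κ → ℝ} {ε : ℝ} (hr : ∀ i, 0 < r i) (hx : ∀ i, 0 < x i) (hy : ∀ j, 0 < y j)
    (hexact : ∀ i, ∑ j, xt i * A i j * yt j = r i)
    (happrox : ∀ i, |(1 / r i) * ∑ j, x i * A i j * y j - 1| ≤ ε) (i : ι) :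
    (1 - ε) * (xt i / x i * ∑ j, A i j * y j * (yt j / y j)) ≤ ∑ j, A i j * y j ∧
      ∑ j, A i j * y j ≤ (1 + ε) * (xt i / x i * ∑ j, A i j * y j * (yt j / y j)) := by
  have hS : ∑ j, x i * A i j * y j = x i * ∑ j, A i j * y j := by
    rw [mul_sum]; exact sum_congr rfl fun j _ => by ring
  have hR : r i = x i * (xt i / x i * ∑ j, A i j * y j * (yt j / y j)) := by
    rw [← hexact i, mul_sum, mul_sum]
    exact sum_congr rfl fun j _ => by field_simp [(hx i).ne', (hy j).ne']
  obtain ⟨h₁, h₂⟩ := le_and_le_of_abs_one_div_mul_sub_one_le_s19 (hr i) (happrox i)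
  rw [hS, hR] at h₁ h₂
  exact ⟨le_of_mul_le_mul_left (by linarith) (hx i), le_of_mul_le_mul_left (by linarith) (hx i)⟩

lemma mutual_contraction {a b ε pm pM qm qM : ℝ} (ha : 0 < a) (hab : a ≤ b) (hε : 0 ≤ ε)
    (hε1 : ε < 1) (hqm : 0 < qm)
    (hp : (1 - ε) * b * qm * pM ≤ (1 + ε) * (a * qm + (b - a) * qM) * pm)
    (hq : (1 - ε) * b * pm * qM ≤ (1 + ε) * (a * pm + (b - a) * pM) * qm) :
    pM * ((1 + ε) * a - 2 * ε * b) ≤ (1 + ε) * a * pm := by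
  have hF : 0 < (1 - ε) * b + (1 + ε) * (b - a) := by nlinarith
  refine le_of_mul_le_mul_left ?_ (mul_pos hqm hF)
  -- adding `(1 - ε) b` times `hp` and `(1 + ε) (b - a)` times `hq`, the terms in `qM` cancel
  nlinarith [mul_le_mul_of_nonneg_left hp (by nlinarith : 0 ≤ (1 - ε) * b),
    mul_le_mul_of_nonneg_left hq (by nlinarith : 0 ≤ (1 + ε) * (b - a))]

lemma le_sq_of_contraction_or_crude {ε β P : ℝ} (hε0 : 0 ≤ ε) (hε : ε ≤ 1 / 2) (hβ : 1 ≤ β)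
    (hcontr : P * (1 + ε - 2 * ε * β) ≤ 1 + ε) (hcrude : (1 - ε) * P ≤ (1 + ε) * β ^ 2) :
    P ≤ ((1 - ε) * (1 + ε * (2 + 4 * β ^ 3))) ^ 2 := by
  have hG : 1 + 4 * ε * (1 - ε) * β ^ 3 ≤ (1 - ε) * (1 + ε * (2 + 4 * β ^ 3)) := by nlinarith
  rcases le_or_gt (4 * ε * β) (1 + ε) with h | h
  · have hw : 1 + 2 * ε * β ≤ 1 + 4 * ε * (1 - ε) * β ^ 3 := by
      nlinarith [pow_le_pow_right₀ hβ (show 1 ≤ 3 by norm_num)]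
    have hpos : 0 < 1 + ε - 2 * ε * β := by linarith
    have hkey : 1 + ε ≤ (1 + 2 * ε * β) ^ 2 * (1 + ε - 2 * ε * β) := by
      have hw0 : 0 ≤ 2 * ε * β := by positivity
      have hw1 : 2 * ε * β ≤ (1 + ε) / 2 := by linarith
      generalize 2 * ε * β = w at hw0 hw1 ⊢
      nlinarith [mul_nonneg hw0 (mul_nonneg hw0 hε0), mul_nonneg hw0 (sub_nonneg.2 hw1)]
    have hP : P ≤ (1 + 2 * ε * β) ^ 2 := le_of_mul_le_mul_right (hcontr.trans hkey) hpos
    exact hP.trans (pow_le_pow_left₀ (by positivity) (hw.trans hG) 2)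
  · have hw : 1 + 3 / 4 * β ^ 2 ≤ 1 + 4 * ε * (1 - ε) * β ^ 3 := by
      nlinarith [mul_le_mul_of_nonneg_right h.le (mul_nonneg (by linarith) (sq_nonneg β) :
          0 ≤ (1 - ε) * β ^ 2),
        mul_le_mul_of_nonneg_right (by nlinarith : ε ^ 2 ≤ 1 / 4) (sq_nonneg β)]
    calc P ≤ 3 * β ^ 2 := by nlinarith
      _ ≤ (1 + 3 / 4 * β ^ 2) ^ 2 := by nlinarith [sq_nonneg (1 - 3 / 4 * β ^ 2)]
      _ ≤ _ := pow_le_pow_left₀ (by positivity) (hw.trans hG) 2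

lemma le_sq_mul_of_contraction_or_crude {a b ε pm pM : ℝ} (ha : 0 < a) (hab : a ≤ b)
    (hε0 : 0 ≤ ε) (hε : ε ≤ 1 / 2) (hpm : 0 < pm)
    (hcontr : pM * ((1 + ε) * a - 2 * ε * b) ≤ (1 + ε) * a * pm)
    (hcrude : (1 - ε) * a ^ 2 * pM ≤ (1 + ε) * b ^ 2 * pm) :
    pM ≤ ((1 - ε) * (1 + ε * (2 + 4 * (b / a) ^ 3))) ^ 2 * pm := by
  rw [← div_le_iff₀ hpm]
  refine le_sq_of_contraction_or_crude hε0 hε ((one_le_div ha).2 hab) ?_ ?_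
  · have e : pM / pm * (1 + ε - 2 * ε * (b / a)) =
        pM * ((1 + ε) * a - 2 * ε * b) / (a * pm) := by
      field_simp
    rw [e, div_le_iff₀ (mul_pos ha hpm)]
    linarith
  · have e : (1 - ε) * (pM / pm) = (1 - ε) * a ^ 2 * pM / (a ^ 2 * pm) := by
      field_simp
    rw [e, div_le_iff₀ (by positivity), div_pow]
    calc (1 - ε) * a ^ 2 * pM ≤ (1 + ε) * b ^ 2 * pm := hcrude
      _ = _ := by field_simp

lemma exists_abs_div_sub_one_le {ι κ : Type*} [Nonempty ι] {p : ι → ℝ} {q : κ → ℝ}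
    {pm pM ε T : ℝ} (hpm : 0 < pm) (hp : ∀ i, pm ≤ p i ∧ p i ≤ pM)
    (hq : ∀ j, (1 - ε) * pm * q j ≤ 1 ∧ 1 ≤ (1 + ε) * pM * q j)
    (hε0 : 0 ≤ ε) (hε1 : ε < 1) (hT : 0 ≤ T) (hG : pM ≤ ((1 - ε) * (1 + T)) ^ 2 * pm) :
    ∃ t > 0, (∀ i, |p i / t - 1| ≤ T) ∧ ∀ j, |t * q j - 1| ≤ T := by
  have hpM : 0 < pM := hpm.trans_le ((hp (Classical.arbitrary ι)).1.trans (hp _).2)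
  set t := Real.sqrt (pm * pM)
  have ht : 0 < t := Real.sqrt_pos.2 (mul_pos hpm hpM)
  have ht2 : t ^ 2 = pm * pM := Real.sq_sqrt (mul_pos hpm hpM).le
  have hG0 : 0 < (1 - ε) * (1 + T) := mul_pos (by linarith) (by linarith)
  have htG : t ≤ (1 - ε) * (1 + T) * pm :=
    (pow_le_pow_iff_left₀ ht.le (by positivity) two_ne_zero).1 (by nlinarith)
  have hMG : pM ≤ (1 - ε) * (1 + T) * t :=
    (pow_le_pow_iff_left₀ hpM.le (by positivity) two_ne_zero).1 (by nlinarith)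
  have hq0 : ∀ j, 0 < q j := fun j =>
    pos_of_mul_pos_right (one_pos.trans_le (hq j).2) (by positivity)
  refine ⟨t, ht, fun i => abs_le.2 ⟨?_, ?_⟩, fun j => abs_le.2 ⟨?_, ?_⟩⟩
  · suffices (1 - T) * t ≤ p i by linarith [(le_div_iff₀ ht).2 this]
    rcases le_total T 1 with h | h
    · calc (1 - T) * t ≤ (1 - T) * ((1 - ε) * (1 + T) * pm) :=
            mul_le_mul_of_nonneg_left htG (sub_nonneg.2 h)
        _ = (1 - ε) * (1 - T ^ 2) * pm := by ring
        _ ≤ pm := mul_le_of_le_one_left hpm.le (by nlinarith [sq_nonneg T])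
        _ ≤ p i := (hp i).1
    · nlinarith [(hp i).1]
  · suffices p i ≤ (1 + T) * t by linarith [(div_le_iff₀ ht).2 this]
    nlinarith [(hp i).2]
  · suffices 1 - T ≤ t * q j by linarith
    rcases le_total T 1 with h | h
    · calc 1 - T = (1 - T) * 1 := (mul_one _).symm
        _ ≤ (1 - T) * ((1 + ε) * pM * q j) := mul_le_mul_of_nonneg_left (hq j).2 (by linarith)
        _ ≤ (1 - T) * ((1 + ε) * ((1 - ε) * (1 + T) * t) * q j) := by
            gcongr
            exact (hq0 j).le
        _ = (1 - ε ^ 2) * (1 - T ^ 2) * (t * q j) := by ring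
        _ ≤ t * q j := mul_le_of_le_one_left (mul_pos ht (hq0 j)).le
            (mul_le_one₀ (by nlinarith) (by nlinarith) (by nlinarith))
    · nlinarith [mul_pos ht (hq0 j)]
  · nlinarith [mul_le_mul_of_nonneg_right htG (hq0 j).le, (hq j).1]

theorem exists_rescaling_near_of_isApproxScaling {ι κ : Type*} [Fintype ι] [Fintype κ]
    [Nonempty ι] [Nonempty κ] {A : ι → κ → ℝ} {r x xt : ι → ℝ} {c y yt : κ → ℝ} {a b ε : ℝ}
    (ha : 0 < a) (hA : ∀ i j, a ≤ A i j ∧ A i j ≤ b) (hε0 : 0 ≤ ε) (hε : ε ≤ 1 / 2)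
    (hr : ∀ i, 0 < r i) (hc : ∀ j, 0 < c j) (hx : ∀ i, 0 < x i) (hy : ∀ j, 0 < y j)
    (hxt : ∀ i, 0 < xt i) (hyt : ∀ j, 0 < yt j)
    (hs : IsScaling A r c xt yt) (happ : IsApproxScaling ε A r c x y) :
    ∃ t > 0, (∀ i, |xt i / t - x i| / x i ≤ ε * (2 + 4 * (b / a) ^ 3)) ∧
      ∀ j, |t * yt j - y j| / y j ≤ ε * (2 + 4 * (b / a) ^ 3) := by
  have hab : a ≤ b := (hA (Classical.arbitrary ι) (Classical.arbitrary κ)).1.trans (hA _ _).2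
  have hAt : ∀ j i, a ≤ A i j ∧ A i j ≤ b := fun j i => hA i j
  set p : ι → ℝ := fun i => xt i / x i
  set q : κ → ℝ := fun j => yt j / y j
  have hp : ∀ i, 0 < p i := fun i => div_pos (hxt i) (hx i)
  have hq : ∀ j, 0 < q j := fun j => div_pos (hyt j) (hy j)
  have hrow := approx_ratio_of_rows hr hx hy hs.1 happ.1
  have hcol := approx_ratio_of_rows hc hy hx hs.transpose.1 happ.transpose.1
  obtain ⟨im, him⟩ := Finite.exists_min p
  obtain ⟨iM, hiM⟩ := Finite.exists_max p
  obtain ⟨jm, hjm⟩ := Finite.exists_min q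
  obtain ⟨jM, hjM⟩ := Finite.exists_max q
  have hspread := le_sq_mul_of_contraction_or_crude ha hab hε0 hε (hp im)
    (mutual_contraction ha hab hε0 (by linarith) (hq jm)
      (approx_ratio_contraction (p := p) (q := q) ha hab hA hy hq (fun i => (hp i).le) hε0 hrow
        (hq jm) hjm hjM iM im)
      (approx_ratio_contraction (p := q) (q := p) ha hab hAt hx hp (fun j => (hq j).le) hε0 hcol
        (hp im) him hiM jM jm))
    (approx_ratio_crude (p := p) (q := q) ha hab hA hy hq (fun i => (hp i).le) hε0 hrow iM im)
  have hw : ∀ j i, 0 < A i j * x i := fun j i => mul_pos (ha.trans_le (hA i j).1) (hx i)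
  obtain ⟨t, ht, hpt, hqt⟩ := exists_abs_div_sub_one_le (hp im) (fun i => ⟨him i, hiM i⟩)
    (fun j => ⟨one_sub_mul_mul_le_one (hw j) (by linarith) (hq j).le (hcol j).1 him,
      one_le_one_add_mul_mul (hw j) hε0 (hq j).le (hcol j).2 hiM⟩)
    hε0 (by linarith) (mul_nonneg hε0 (by have := div_pos (ha.trans_le hab) ha; positivity))
    hspread
  refine ⟨t, ht, fun i => ?_, fun j => ?_⟩
  · rw [show xt i / t - x i = x i * (p i / t - 1) by simp only [p]; field_simp [(hx i).ne'],
      abs_mul, abs_of_pos (hx i), mul_div_cancel_left₀ _ (hx i).ne']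
    exact hpt i
  · rw [show t * yt j - y j = y j * (t * q j - 1) by simp only [q]; field_simp [(hy j).ne'],
      abs_mul, abs_of_pos (hy j), mul_div_cancel_left₀ _ (hy j).ne']
    exact hqt j

lemma one_le_sum_div_card_mul_iInf {ι : Type*} [Fintype ι] [Nonempty ι] {f : ι → ℝ}
    (hf : ∀ i, 0 < f i) : 1 ≤ (∑ i, f i) / (Fintype.card ι * ⨅ i, f i) := by
  obtain ⟨i₀, hi₀⟩ := exists_eq_ciInf_of_finite (f := f)
  rw [one_le_div (mul_pos (by exact_mod_cast Fintype.card_pos) (hi₀ ▸ hf i₀))]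
  calc (Fintype.card ι : ℝ) * ⨅ i, f i = ∑ _i : ι, ⨅ i, f i := by simp
    _ ≤ ∑ i, f i := sum_le_sum fun i _ => ciInf_le (Finite.bddBelow_range f) i

lemma pow_three_le_mul_rpow {β K : ℝ} (hβ : 1 ≤ β) (hK : 1 ≤ K) :
    β ^ 3 ≤ K * β ^ ((7 : ℝ) / 2) :=
  calc β ^ 3 = β ^ ((3 : ℕ) : ℝ) := (Real.rpow_natCast β 3).symm
    _ ≤ β ^ ((7 : ℝ) / 2) := Real.rpow_le_rpow_of_exponent_le hβ (by norm_num)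
    _ ≤ K * β ^ ((7 : ℝ) / 2) := le_mul_of_one_le_left (by positivity) hK

theorem stability_of_scaling_factors_specialized_general
    (M N : ℕ) (hM : 0 < M) (hN : 0 < N)
    (At : Fin M → Fin N → ℝ) (a b s ε : ℝ)
    (x : Fin M → ℝ) (y : Fin N → ℝ) (r : Fin M → ℝ) (c : Fin N → ℝ)
    (ha : 0 < a) (hab : a ≤ b)
    (hA : ∀ i j, a ≤ At i j ∧ At i j ≤ b)
    (hr : ∀ i, 0 < r i) (hc : ∀ j, 0 < c j)
    (hs_r : ∑ i, r i = s) (hs_c : ∑ j, c j = s)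
    (hx : ∀ i, 0 < x i) (hy : ∀ j, 0 < y j)
    (hε : ε ∈ Set.Ioc (0 : ℝ) (1 / 2))
    (hcolε : ∀ j, |(1 / c j) * ∑ i, x i * At i j * y j - 1| ≤ ε)
    (hrowε : ∀ i, |(1 / r i) * ∑ j, x i * At i j * y j - 1| ≤ ε) :
    ∃ (xt : Fin M → ℝ) (yt : Fin N → ℝ),
      (∀ i, 0 < xt i) ∧ (∀ j, 0 < yt j) ∧
      (∀ i, ∑ j, xt i * At i j * yt j = r i) ∧
      (∀ j, ∑ i, xt i * At i j * yt j = c j) ∧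
      (∀ i, |xt i - x i| / x i ≤
        ε * (2 + 4 * (s / (M * ⨅ i', r i')) * (b / a) ^ ((7 : ℝ) / 2))) ∧
      (∀ j, |yt j - y j| / y j ≤
        ε * (2 + 4 * (s / (N * ⨅ j', c j')) * (b / a) ^ ((7 : ℝ) / 2))) := by
  have : Nonempty (Fin M) := ⟨⟨0, hM⟩⟩
  have : Nonempty (Fin N) := ⟨⟨0, hN⟩⟩
  obtain ⟨xt, yt, hxt, hyt, hs⟩ :=
    exists_isScaling (fun i j => ha.trans_le (hA i j).1) hr hc (hs_r.trans hs_c.symm)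
  obtain ⟨t, ht, hxt_near, hyt_near⟩ := exists_rescaling_near_of_isApproxScaling ha hA hε.1.le
    hε.2 hr hc hx hy hxt hyt hs ⟨hrowε, hcolε⟩
  have hbound : ∀ K, 1 ≤ K →
      ε * (2 + 4 * (b / a) ^ 3) ≤ ε * (2 + 4 * K * (b / a) ^ ((7 : ℝ) / 2)) := fun K hK =>
    mul_le_mul_of_nonneg_left
      (by nlinarith [pow_three_le_mul_rpow ((one_le_div ha).2 hab) hK]) hε.1.le
  refine ⟨fun i => xt i / t, fun j => t * yt j, fun i => div_pos (hxt i) ht,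
    fun j => mul_pos ht (hyt j), (hs.div_mul ht.ne').1, (hs.div_mul ht.ne').2,
    fun i => (hxt_near i).trans (hbound _ ?_), fun j => (hyt_near j).trans (hbound _ ?_)⟩
  · simpa [hs_r] using one_le_sum_div_card_mul_iInf hr
  · simpa [hs_c] using one_le_sum_div_card_mul_iInf hc

theorem stability_of_scaling_factors_specialized
    (M N : ℕ) (hM : 0 < M) (hN : 0 < N)
    (At : Fin M → Fin N → ℝ) (a b s ε : ℝ)
    (x : Fin M → ℝ) (y : Fin N → ℝ) (r : Fin M → ℝ) (c : Fin N → ℝ)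
    (ha : 0 < a) (hab : a ≤ b)
    (hA : ∀ i j, a ≤ At i j ∧ At i j ≤ b)
    (hr : ∀ i, 0 < r i) (hc : ∀ j, 0 < c j)
    (hs_r : ∑ i, r i = s) (hs_c : ∑ j, c j = s)
    (hx : ∀ i, 0 < x i) (hy : ∀ j, 0 < y j)
    (hC1 : Real.sqrt a / b ≤ ⨅ i, x i / (r i / Real.sqrt s))
    (hC2 : Real.sqrt a / b ≤ ⨅ j, y j / (c j / Real.sqrt s))
    (hε : ε ∈ Set.Ioc (0 : ℝ) (1 / 2))
    (hcolε : ∀ j, |(1 / c j) * ∑ i, x i * At i j * y j - 1| ≤ ε)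
    (hrowε : ∀ i, |(1 / r i) * ∑ j, x i * At i j * y j - 1| ≤ ε) :
    ∃ (xt : Fin M → ℝ) (yt : Fin N → ℝ),
      (∀ i, 0 < xt i) ∧ (∀ j, 0 < yt j) ∧
      (∀ i, ∑ j, xt i * At i j * yt j = r i) ∧
      (∀ j, ∑ i, xt i * At i j * yt j = c j) ∧
      (∀ i, |xt i - x i| / x i ≤
        ε * (2 + 4 * (s / (M * ⨅ i', r i')) * (b / a) ^ ((7 : ℝ) / 2))) ∧
      (∀ j, |yt j - y j| / y j ≤
        ε * (2 + 4 * (s / (N * ⨅ j', c j')) * (b / a) ^ ((7 : ℝ) / 2))) :=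
  stability_of_scaling_factors_specialized_general M N hM hN At a b s ε x y r c ha hab hA hr hc hs_r
    hs_c hx hy hε hcolε hrowε
end
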